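/- arXiv:2204.08639 — 8 statements merged into one kernel-verified Lean document; each statement's English description precedes it below -/
import Mathlib

section
/- Let F be a field of characteristic p > 0, let B be an associative unital F-algebra, and let M and M' be semisimple left B-modules that are finite dimensional over F with dim_F M = dim_F M'. Then M and M' are isomorphic as B-modules if and only if for every a ∈ B the characteristic polynomial of the F-linear endomorphism x ↦ a • x of M equals the characteristic polynomial of the F-linear endomorphism x ↦ a • x of M'. -/
/-! Auxiliary development for the Brauer–Nesbitt theorem. -/

open Submodule Module Polynomial

section Isotypic

variable (R : Type*) [Ring R] (S : Type*) [AddCommGroup S] [Module R S]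

/-- The sup of all submodules isomorphic to `S` (the `S`-isotypic component). -/
noncomputable def pIso (N : Type*) [AddCommGroup N] [Module R N] : Submodule R N :=
  sSup {T : Submodule R N | Nonempty (↥T ≃ₗ[R] S)}

/-- The sup of all simple submodules not isomorphic to `S`. -/
noncomputable def qIso (N : Type*) [AddCommGroup N] [Module R N] : Submodule R N :=
  sSup {T : Submodule R N | IsSimpleModule R ↥T ∧ IsEmpty (↥T ≃ₗ[R] S)}

variable {R S}
variable {N : Type*} [AddCommGroup N] [Module R N]

theorem le_pIso {T : Submodule R N} (h : Nonempty (↥T ≃ₗ[R] S)) : T ≤ pIso R S N :=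
  le_sSup h

theorem le_qIso {T : Submodule R N} (h1 : IsSimpleModule R ↥T) (h2 : IsEmpty (↥T ≃ₗ[R] S)) :
    T ≤ qIso R S N :=
  le_sSup ⟨h1, h2⟩

/-- A simple submodule lying below a sup of simple submodules is isomorphic to one of them. -/
theorem exists_iso_of_le_sSup [IsSemisimpleModule R N] {𝒮 : Set (Submodule R N)}
    (h𝒮 : ∀ T ∈ 𝒮, IsSimpleModule R ↥T) {T' : Submodule R N} (hT' : IsSimpleModule R ↥T')
    (hle : T' ≤ sSup 𝒮) : ∃ T ∈ 𝒮, Nonempty (↥T' ≃ₗ[R] ↥T) := by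
  obtain ⟨C, hC⟩ := exists_isCompl T'
  set π := T'.linearProjOfIsCompl C hC with hπ
  have hbot : T' ≠ ⊥ := (isSimpleModule_iff_isAtom.mp hT').1
  obtain ⟨t, htT', ht0⟩ := Submodule.exists_mem_ne_zero_of_ne_bot hbot
  obtain ⟨s, hs𝒮, hmem⟩ := Submodule.mem_sSup_iff_exists_finset.mp (hle htT')
  have hexT : ∃ T ∈ s, ¬ T ≤ LinearMap.ker π := by
    by_contra h
    push_neg at h
    have hsub : (⨆ T ∈ s, T) ≤ LinearMap.ker π := iSup₂_le h
    have h0 : π t = 0 := hsub hmem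
    have h1 : π t = ⟨t, htT'⟩ := Submodule.linearProjOfIsCompl_apply_left hC ⟨t, htT'⟩
    rw [h0] at h1
    exact ht0 (by simpa using congrArg Subtype.val h1.symm)
  obtain ⟨T, hTs, hTπ⟩ := hexT
  haveI := h𝒮 T (hs𝒮 hTs)
  set g : ↥T →ₗ[R] ↥T' := π ∘ₗ T.subtype with hg
  have hgne : g ≠ 0 := by
    intro h0
    apply hTπ
    intro x hx
    have hx0 := DFunLike.congr_fun h0 ⟨x, hx⟩
    simpa [hg, LinearMap.mem_ker] using hx0
  exact ⟨T, hs𝒮 hTs, ⟨(LinearEquiv.ofBijective g (g.bijective_of_ne_zero hgne)).symm⟩⟩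

theorem pIso_sup_qIso [IsSemisimpleModule R N] : pIso R S N ⊔ qIso R S N = ⊤ := by
  rw [eq_top_iff, ← IsSemisimpleModule.sSup_simples_eq_top R N]
  refine sSup_le fun T hT => ?_
  by_cases h : Nonempty (↥T ≃ₗ[R] S)
  · exact le_trans (le_pIso h) le_sup_left
  · exact le_trans (le_qIso hT (not_nonempty_iff.mp h)) le_sup_right

theorem pIso_inf_qIso [IsSemisimpleModule R N] [IsSimpleModule R S] :
    pIso R S N ⊓ qIso R S N = ⊥ := by
  rcases IsSemisimpleModule.eq_bot_or_exists_simple_le (pIso R S N ⊓ qIso R S N) with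
    h | ⟨T', hle, hT'⟩
  · exact h
  · exfalso
    obtain ⟨T₁, hT₁, ⟨e₁⟩⟩ := exists_iso_of_le_sSup
      (𝒮 := {T : Submodule R N | Nonempty (↥T ≃ₗ[R] S)})
      (fun T hT => hT.elim fun e => IsSimpleModule.congr e) hT' (hle.trans inf_le_left)
    obtain ⟨T₂, hT₂, ⟨e₂⟩⟩ := exists_iso_of_le_sSup
      (𝒮 := {T : Submodule R N | IsSimpleModule R ↥T ∧ IsEmpty (↥T ≃ₗ[R] S)})
      (fun T hT => hT.1) hT' (hle.trans inf_le_right)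
    obtain ⟨e⟩ := hT₁
    exact hT₂.2.false (e₂.symm.trans (e₁.trans e))

theorem pIso_eq_bot [IsSimpleModule R S]
    (h : ∀ T : Submodule R N, IsSimpleModule R ↥T → IsEmpty (↥T ≃ₗ[R] S)) :
    pIso R S N = ⊥ := by
  rw [pIso, sSup_eq_bot]
  rintro T ⟨e⟩
  exact ((h T (IsSimpleModule.congr e)).false e).elim

theorem map_pIso_le [IsSimpleModule R S] {W : Type*} [AddCommGroup W] [Module R W]
    (f : N →ₗ[R] W) : (pIso R S N).map f ≤ pIso R S W := by
  rw [Submodule.map_le_iff_le_comap]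
  refine sSup_le fun T hT => ?_
  rw [← Submodule.map_le_iff_le_comap]
  obtain ⟨e⟩ := hT
  haveI : IsSimpleModule R ↥T := IsSimpleModule.congr e
  have hr : T.map f = LinearMap.range (f ∘ₗ T.subtype) := by
    rw [LinearMap.range_comp, Submodule.range_subtype]
  rcases LinearMap.injective_or_eq_zero (f ∘ₗ T.subtype) with hinj | h0
  · rw [hr]
    exact le_sSup ⟨(LinearEquiv.ofInjective _ hinj).symm.trans e⟩
  · rw [hr, h0, LinearMap.range_zero]
    exact bot_le

theorem map_qIso_le [IsSimpleModule R S] {W : Type*} [AddCommGroup W] [Module R W]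
    (f : N →ₗ[R] W) : (qIso R S N).map f ≤ qIso R S W := by
  rw [Submodule.map_le_iff_le_comap]
  refine sSup_le fun T hT => ?_
  rw [← Submodule.map_le_iff_le_comap]
  obtain ⟨hTs, hTe⟩ := hT
  have hr : T.map f = LinearMap.range (f ∘ₗ T.subtype) := by
    rw [LinearMap.range_comp, Submodule.range_subtype]
  rcases LinearMap.injective_or_eq_zero (f ∘ₗ T.subtype) with hinj | h0
  · rw [hr]
    refine le_sSup ⟨IsSimpleModule.congr (LinearEquiv.ofInjective _ hinj).symm, ?_⟩
    exact ⟨fun e => hTe.false ((LinearEquiv.ofInjective _ hinj).trans e)⟩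
  · rw [hr, h0, LinearMap.range_zero]
    exact bot_le

end Isotypic

section Semisimple

theorem isSemisimpleModule_pi {R W : Type*} [Ring R] [AddCommGroup W] [Module R W]
    [IsSemisimpleModule R W] (d : ℕ) : IsSemisimpleModule R (Fin d → W) := by
  classical
  refine isSemisimpleModule_of_isSemisimpleModule_submodule'
    (p := fun i : Fin d => LinearMap.range (LinearMap.single R (fun _ : Fin d => W) i))
    (fun i => IsSemisimpleModule.range _) ?_
  rw [eq_top_iff]
  intro x _
  have hx : x = ∑ i, Pi.single i (x i) := (Finset.univ_sum_single x).symm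
  rw [hx]
  exact Submodule.sum_mem _ fun i _ =>
    Submodule.mem_iSup_of_mem i ⟨x i, rfl⟩

theorem isSemisimpleModule_prod {R M M' : Type*} [Ring R] [AddCommGroup M] [Module R M]
    [AddCommGroup M'] [Module R M'] [IsSemisimpleModule R M] [IsSemisimpleModule R M'] :
    IsSemisimpleModule R (M × M') := by
  have h1 : IsSemisimpleModule R ↥(LinearMap.range (LinearMap.inl R M M')) :=
    IsSemisimpleModule.range _
  have h2 : IsSemisimpleModule R ↥(LinearMap.range (LinearMap.inr R M M')) :=
    IsSemisimpleModule.range _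
  have h3 := IsSemisimpleModule.sup h1 h2
  rw [LinearMap.sup_range_inl_inr] at h3
  haveI := h3
  exact IsSemisimpleModule.congr Submodule.topEquiv.symm

end Semisimple

section KeyElement

/-- Key lemma: there exists an element of `B` acting as the identity on the `S`-isotypic
component and as zero on its canonical complement. -/
theorem exists_proj_smul (F B : Type*) [Field F] [Ring B] [Algebra F B]
    (W : Type*) [AddCommGroup W] [Module B W] [Module F W] [IsScalarTower F B W]
    [FiniteDimensional F W] [IsSemisimpleModule B W]
    (S : Type*) [AddCommGroup S] [Module B S] [IsSimpleModule B S] :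
    ∃ a : B, (∀ t ∈ pIso B S W, a • t = t) ∧ (∀ t ∈ qIso B S W, a • t = 0) := by
  classical
  set d := Module.finrank F W with hd
  let b : Basis (Fin d) F W := Module.finBasis F W
  haveI : IsSemisimpleModule B (Fin d → W) := isSemisimpleModule_pi d
  set x₀ : Fin d → W := fun i => b i with hx₀def
  set N : Submodule B (Fin d → W) := Submodule.span B {x₀} with hN
  have hx₀ : x₀ ∈ N := Submodule.mem_span_singleton_self x₀
  have hsup : pIso B S ↥N ⊔ qIso B S ↥N = ⊤ := pIso_sup_qIso
  have hx : (⟨x₀, hx₀⟩ : ↥N) ∈ pIso B S ↥N ⊔ qIso B S ↥N := by rw [hsup]; trivial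
  obtain ⟨u, hu, v, hv, huv⟩ := Submodule.mem_sup.mp hx
  obtain ⟨a, ha⟩ := Submodule.mem_span_singleton.mp u.2
  have key : ∀ t : W, a • t ∈ pIso B S W ∧ (t - a • t) ∈ qIso B S W := by
    intro t
    set ε : (Fin d → W) →ₗ[B] W := ∑ i, (b.repr t) i • LinearMap.proj i with hε
    have hεx₀ : ε x₀ = t := by
      rw [hε]
      simp only [LinearMap.coe_sum, Finset.sum_apply, LinearMap.smul_apply,
        LinearMap.proj_apply]
      exact b.sum_repr t
    have hεu : ε ↑u ∈ pIso B S W := map_pIso_le (ε ∘ₗ N.subtype) ⟨u, hu, rfl⟩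
    have hεv : ε ↑v ∈ qIso B S W := map_qIso_le (ε ∘ₗ N.subtype) ⟨v, hv, rfl⟩
    have hat : a • t = ε ↑u := by
      rw [← hεx₀, ← map_smul, ha]
    have hsplit : t = ε ↑u + ε ↑v := by
      rw [← map_add]
      have : (↑u : Fin d → W) + ↑v = x₀ := by
        have := congrArg Subtype.val huv
        simpa using this
      rw [this, hεx₀]
    constructor
    · rw [hat]; exact hεu
    · have hh : t - a • t = ε ↑v := by rw [hat, hsplit]; abel
      rw [hh]; exact hεv
  refine ⟨a, fun t ht => ?_, fun t ht => ?_⟩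
  · have h1 : t - a • t ∈ pIso B S W := sub_mem ht (key t).1
    have h2 : t - a • t ∈ pIso B S W ⊓ qIso B S W := ⟨h1, (key t).2⟩
    rw [pIso_inf_qIso, Submodule.mem_bot] at h2
    have := sub_eq_zero.mp h2
    exact this.symm
  · have h1 : a • t ∈ qIso B S W := by
      have : a • t = t - (t - a • t) := by abel
      rw [this]
      exact sub_mem ht (key t).2
    have h2 : a • t ∈ pIso B S W ⊓ qIso B S W := ⟨(key t).1, h1⟩
    rwa [pIso_inf_qIso, Submodule.mem_bot] at h2

end KeyElement

section CharpolyLemmas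

variable {F B : Type*} [Field F] [Ring B] [Algebra F B]

theorem charpoly_lsmul_congr {M₁ M₂ : Type*}
    [AddCommGroup M₁] [Module B M₁] [Module F M₁] [IsScalarTower F B M₁]
    [AddCommGroup M₂] [Module B M₂] [Module F M₂] [IsScalarTower F B M₂]
    [FiniteDimensional F M₁] [FiniteDimensional F M₂] (e : M₁ ≃ₗ[B] M₂) (a : B) :
    LinearMap.charpoly (Algebra.lsmul F F M₁ a : M₁ →ₗ[F] M₁) =
      LinearMap.charpoly (Algebra.lsmul F F M₂ a : M₂ →ₗ[F] M₂) := by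
  let e₀ : M₁ ≃ₗ[F] M₂ := e.restrictScalars F
  have h : (Algebra.lsmul F F M₂ a : M₂ →ₗ[F] M₂) = e₀.conj (Algebra.lsmul F F M₁ a) := by
    ext x
    rw [LinearEquiv.conj_apply, LinearMap.comp_apply, LinearMap.comp_apply]
    show a • x = e₀ (a • (e₀.symm x))
    have : e₀ (a • (e₀.symm x)) = e (a • (e.symm x)) := rfl
    rw [this, map_smul, LinearEquiv.apply_symm_apply]
  rw [h, LinearEquiv.charpoly_conj]

theorem lsmul_prod_eq {M₁ M₂ : Type*}
    [AddCommGroup M₁] [Module B M₁] [Module F M₁] [IsScalarTower F B M₁]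
    [AddCommGroup M₂] [Module B M₂] [Module F M₂] [IsScalarTower F B M₂] (a : B) :
    (Algebra.lsmul F F (M₁ × M₂) a : (M₁ × M₂) →ₗ[F] (M₁ × M₂)) =
      (Algebra.lsmul F F M₁ a : M₁ →ₗ[F] M₁).prodMap
        (Algebra.lsmul F F M₂ a : M₂ →ₗ[F] M₂) :=
  LinearMap.ext fun _ => rfl

end CharpolyLemmas

section Main

universe u₁ u₂ u₃ u₄

theorem BN_aux {F : Type u₁} {B : Type u₂} [Field F] [Ring B] [Algebra F B] (n : ℕ) :
    ∀ (M : Type u₃) (M' : Type u₄),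
      ∀ [AddCommGroup M] [Module B M] [Module F M] [IsScalarTower F B M]
        [AddCommGroup M'] [Module B M'] [Module F M'] [IsScalarTower F B M']
        [FiniteDimensional F M] [FiniteDimensional F M']
        [IsSemisimpleModule B M] [IsSemisimpleModule B M'],
      Module.finrank F M ≤ n → Module.finrank F M = Module.finrank F M' →
      (∀ a : B,
        LinearMap.charpoly (Algebra.lsmul F F M a : M →ₗ[F] M) =
          LinearMap.charpoly (Algebra.lsmul F F M' a : M' →ₗ[F] M')) →
      Nonempty (M ≃ₗ[B] M') := by
  induction n with
  | zero =>
    intro M M' _ _ _ _ _ _ _ _ _ _ _ _ hn hdim _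
    have hM : Subsingleton M := (Module.finrank_zero_iff (R := F)).mp (Nat.le_zero.mp hn)
    have hM' : Subsingleton M' := (Module.finrank_zero_iff (R := F)).mp (by omega)
    exact ⟨{ toFun := fun _ => 0, map_add' := fun _ _ => Subsingleton.elim _ _,
             map_smul' := fun _ _ => Subsingleton.elim _ _, invFun := fun _ => 0,
             left_inv := fun _ => Subsingleton.elim _ _,
             right_inv := fun _ => Subsingleton.elim _ _ }⟩
  | succ n ih =>
    intro M M' _ _ _ _ _ _ _ _ _ _ _ _ hn hdim H
    rcases subsingleton_or_nontrivial M with hM | hM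
    · have hM' : Subsingleton M' := by
        have h0 : Module.finrank F M = 0 := Module.finrank_zero_iff.mpr hM
        exact (Module.finrank_zero_iff (R := F)).mp (by omega)
      exact ⟨{ toFun := fun _ => 0, map_add' := fun _ _ => Subsingleton.elim _ _,
               map_smul' := fun _ _ => Subsingleton.elim _ _, invFun := fun _ => 0,
               left_inv := fun _ => Subsingleton.elim _ _,
               right_inv := fun _ => Subsingleton.elim _ _ }⟩
    · obtain ⟨T, hT⟩ := IsSemisimpleModule.exists_simple_submodule B M
      haveI : IsSimpleModule B ↥T := hT
      -- Step 1: M' contains a simple submodule isomorphic to T.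
      have step1 : ∃ T' : Submodule B M', IsSimpleModule B ↥T' ∧ Nonempty (↥T' ≃ₗ[B] ↥T) := by
        by_contra hcon
        push_neg at hcon
        have hpbot : pIso B ↥T M' = ⊥ :=
          pIso_eq_bot fun T' hT' => hcon T' hT'
        have hqtop : qIso B ↥T M' = ⊤ := by
          have := pIso_sup_qIso (R := B) (S := ↥T) (N := M')
          rwa [hpbot, bot_sup_eq] at this
        haveI : IsSemisimpleModule B (M × M') := isSemisimpleModule_prod
        obtain ⟨a, hap, haq⟩ := exists_proj_smul F B (M × M') ↥T
        -- a acts as identity on T ⊆ M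
        have hTle : T ≤ pIso B ↥T M := le_pIso ⟨LinearEquiv.refl B ↥T⟩
        have haT : ∀ t ∈ T, a • t = t := by
          intro t htT
          have h1 : ((t, 0) : M × M') ∈ pIso B ↥T (M × M') :=
            map_pIso_le (LinearMap.inl B M M') ⟨t, hTle htT, rfl⟩
          have h2 := hap _ h1
          have := congrArg Prod.fst h2
          simpa using this
        -- a acts as zero on M'
        have haM' : ∀ y : M', a • y = 0 := by
          intro y
          have h1 : ((0, y) : M × M') ∈ qIso B ↥T (M × M') := by
            refine map_qIso_le (LinearMap.inr B M M') ⟨y, ?_, rfl⟩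
            rw [hqtop]; trivial
          have h2 := haq _ h1
          have := congrArg Prod.snd h2
          simpa using this
        -- charpoly contradiction
        have hg0 : (Algebra.lsmul F F M' a : M' →ₗ[F] M') = 0 :=
          LinearMap.ext fun y => haM' y
        have hgnil : IsNilpotent (Algebra.lsmul F F M' a : M' →ₗ[F] M') := by
          rw [hg0]; exact IsNilpotent.zero
        have hgchar : LinearMap.charpoly (Algebra.lsmul F F M' a : M' →ₗ[F] M') =
            X ^ Module.finrank F M' :=
          IsNilpotent.charpoly_eq_X_pow_finrank hgnil
        have hfchar : LinearMap.charpoly (Algebra.lsmul F F M a : M →ₗ[F] M) =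
            X ^ Module.finrank F M := by
          rw [H a, hgchar, hdim]
        have hfnil : IsNilpotent (Algebra.lsmul F F M a : M →ₗ[F] M) :=
          (LinearMap.isNilpotent_iff_charpoly _).mpr hfchar
        obtain ⟨k, hk⟩ := hfnil
        have hTbot : T ≠ ⊥ := (isSimpleModule_iff_isAtom.mp hT).1
        obtain ⟨t, htT, ht0⟩ := Submodule.exists_mem_ne_zero_of_ne_bot hTbot
        have hpow : ∀ m : ℕ, ((Algebra.lsmul F F M a : M →ₗ[F] M) ^ m) t = t := by
          intro m
          induction m with
          | zero => simp
          | succ m ihm =>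
            rw [pow_succ, Module.End.mul_apply]
            have : (Algebra.lsmul F F M a : M →ₗ[F] M) t = t := haT t htT
            rw [this, ihm]
        have := hpow k
        rw [hk] at this
        simp at this
        exact ht0 this.symm
      obtain ⟨T', hT', ⟨eT⟩⟩ := step1
      haveI : IsSimpleModule B ↥T' := hT'
      -- complements
      obtain ⟨C, hC⟩ := exists_isCompl T
      obtain ⟨C', hC'⟩ := exists_isCompl T'
      -- finite dimensionality of submodules
      haveI : FiniteDimensional F ↥T :=
        FiniteDimensional.of_injective (T.subtype.restrictScalars F) T.injective_subtype
      haveI : FiniteDimensional F ↥C :=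
        FiniteDimensional.of_injective (C.subtype.restrictScalars F) C.injective_subtype
      haveI : FiniteDimensional F ↥T' :=
        FiniteDimensional.of_injective (T'.subtype.restrictScalars F) T'.injective_subtype
      haveI : FiniteDimensional F ↥C' :=
        FiniteDimensional.of_injective (C'.subtype.restrictScalars F) C'.injective_subtype
      -- B-linear equivalences with products
      let eM : (↥T × ↥C) ≃ₗ[B] M := Submodule.prodEquivOfIsCompl T C hC
      let eM' : (↥T' × ↥C') ≃ₗ[B] M' := Submodule.prodEquivOfIsCompl T' C' hC'
      -- charpoly factorizations
      have hfac : ∀ a : B,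
          LinearMap.charpoly (Algebra.lsmul F F M a : M →ₗ[F] M) =
            LinearMap.charpoly (Algebra.lsmul F F ↥T a : ↥T →ₗ[F] ↥T) *
              LinearMap.charpoly (Algebra.lsmul F F ↥C a : ↥C →ₗ[F] ↥C) := by
        intro a
        rw [charpoly_lsmul_congr eM.symm a, lsmul_prod_eq, LinearMap.charpoly_prodMap]
      have hfac' : ∀ a : B,
          LinearMap.charpoly (Algebra.lsmul F F M' a : M' →ₗ[F] M') =
            LinearMap.charpoly (Algebra.lsmul F F ↥T' a : ↥T' →ₗ[F] ↥T') *
              LinearMap.charpoly (Algebra.lsmul F F ↥C' a : ↥C' →ₗ[F] ↥C') := by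
        intro a
        rw [charpoly_lsmul_congr eM'.symm a, lsmul_prod_eq, LinearMap.charpoly_prodMap]
      have hTT' : ∀ a : B,
          LinearMap.charpoly (Algebra.lsmul F F ↥T' a : ↥T' →ₗ[F] ↥T') =
            LinearMap.charpoly (Algebra.lsmul F F ↥T a : ↥T →ₗ[F] ↥T) :=
        fun a => charpoly_lsmul_congr eT a
      have HC : ∀ a : B,
          LinearMap.charpoly (Algebra.lsmul F F ↥C a : ↥C →ₗ[F] ↥C) =
            LinearMap.charpoly (Algebra.lsmul F F ↥C' a : ↥C' →ₗ[F] ↥C') := by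
        intro a
        have h1 := H a
        rw [hfac a, hfac' a, hTT' a] at h1
        exact mul_left_cancel₀ (LinearMap.charpoly_monic _).ne_zero h1
      -- dimensions
      have hdT : Module.finrank F ↥T' = Module.finrank F ↥T :=
        (eT.restrictScalars F).finrank_eq
      have hdM : Module.finrank F M = Module.finrank F ↥T + Module.finrank F ↥C := by
        rw [← (eM.restrictScalars F).finrank_eq, Module.finrank_prod]
      have hdM' : Module.finrank F M' = Module.finrank F ↥T' + Module.finrank F ↥C' := by
        rw [← (eM'.restrictScalars F).finrank_eq, Module.finrank_prod]
      haveI : Nontrivial ↥T := IsSimpleModule.nontrivial B ↥T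
      have hTpos : 0 < Module.finrank F ↥T := Module.finrank_pos
      have hdC : Module.finrank F ↥C = Module.finrank F ↥C' := by omega
      have hCn : Module.finrank F ↥C ≤ n := by omega
      obtain ⟨eC⟩ := ih ↥C ↥C' hCn hdC HC
      exact ⟨eM.symm.trans ((LinearEquiv.prodCongr eT.symm eC).trans eM')⟩

end Main

/-- **Brauer–Nesbitt, positive characteristic.**
Let `F` be a field of characteristic `p > 0`, `B` an associative unital `F`-algebra, and
`M`, `M'` semisimple left `B`-modules that are finite dimensional over `F` with
`dim_F M = dim_F M'`.  Then `M ≅ M'` as `B`-modules iff for every `a ∈ B` the characteristic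
polynomial of the `F`-linear endomorphism `x ↦ a • x` of `M` equals that of `M'`. -/
theorem stmt1 {F B M M' : Type*} [Field F] [Ring B] [Algebra F B]
    (p : ℕ) (hp : p.Prime) [CharP F p]
    [AddCommGroup M] [Module B M] [Module F M] [IsScalarTower F B M]
    [AddCommGroup M'] [Module B M'] [Module F M'] [IsScalarTower F B M']
    [FiniteDimensional F M] [FiniteDimensional F M']
    [IsSemisimpleModule B M] [IsSemisimpleModule B M']
    (hdim : Module.finrank F M = Module.finrank F M') :
    Nonempty (M ≃ₗ[B] M') ↔
      ∀ a : B,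
        LinearMap.charpoly (Algebra.lsmul F F M a : M →ₗ[F] M) =
          LinearMap.charpoly (Algebra.lsmul F F M' a : M' →ₗ[F] M') := by
  constructor
  · rintro ⟨e⟩ a
    exact charpoly_lsmul_congr e a
  · intro H
    exact BN_aux (Module.finrank F M) M M' le_rfl hdim H
end

section
/- Let F be a field, let B be an associative unital F-algebra, and let M and M' be semisimple left B-modules that are finite dimensional over F with r := dim_F M = dim_F M'. Assume either that F has characteristic 0, or that F has characteristic p > 0 and r < p. Then M and M' are isomorphic as B-modules if and only if for every a ∈ B the trace of the F-linear endomorphism x ↦ a • x of M equals the trace of the F-linear endomorphism x ↦ a • x of M'. -/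
universe u v w w'


set_option maxHeartbeats 800000 in
set_option synthInstance.maxHeartbeats 80000 in
lemma bn_key {F B N S₀ : Type*} [Field F] [Ring B] [Algebra F B]
    [AddCommGroup N] [Module B N] [Module F N] [IsScalarTower F B N]
    [FiniteDimensional F N] [IsSemisimpleModule B N]
    [AddCommGroup S₀] [Module B S₀] :
    ∃ b : B, ∀ L : Submodule B N, IsSimpleModule B L → ∀ x ∈ L,
      (Nonempty (L ≃ₗ[B] S₀) → b • x = x) ∧ (¬ Nonempty (L ≃ₗ[B] S₀) → b • x = 0) := by
  classical
  let n := Module.finrank F N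
  let bas := Module.finBasis F N
  let φ : B →ₗ[B] (Fin n → N) := LinearMap.pi fun i => LinearMap.toSpanSingleton B N (bas i)
  haveI : IsSemisimpleModule B (Fin n → N) :=
    isSemisimpleModule_of_isSemisimpleModule_submodule'
      (p := fun i => LinearMap.range (LinearMap.single B (fun _ : Fin n => N) i))
      (fun i => .range _)
      (by simp_rw [LinearMap.range_eq_map, Submodule.iSup_map_single, Submodule.pi_top])
  let W := LinearMap.range φ
  let P : Submodule B W := sSup {L | IsSimpleModule B L ∧ Nonempty (L ≃ₗ[B] S₀)}
  let Q : Submodule B W := sSup {L | IsSimpleModule B L ∧ ¬ Nonempty (L ≃ₗ[B] S₀)}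
  have hPQ : P ⊔ Q = ⊤ := by
    rw [← IsSemisimpleModule.sSup_simples_eq_top B W]
    refine le_antisymm (sup_le (sSup_le_sSup fun L hL => hL.1) (sSup_le_sSup fun L hL => hL.1))
      (sSup_le fun L hL => ?_)
    by_cases h : Nonempty (L ≃ₗ[B] S₀)
    · exact le_sup_of_le_left (le_sSup ⟨hL, h⟩)
    · exact le_sup_of_le_right (le_sSup ⟨hL, h⟩)
  have hw₀ : φ 1 ∈ W := LinearMap.mem_range_self φ 1
  have hmemtop : (⟨φ 1, hw₀⟩ : W) ∈ P ⊔ Q := hPQ ▸ Submodule.mem_top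
  obtain ⟨u, hu, v, hv, huv⟩ := Submodule.mem_sup.mp hmemtop
  obtain ⟨b, hb⟩ : (u : Fin n → N) ∈ W := u.2
  refine ⟨b, fun L hL x hx => ?_⟩
  haveI := hL
  let εN : (Fin n → N) →ₗ[B] N :=
    { toFun := fun w => ∑ i, bas.repr x i • w i
      map_add' := by
        intro w w'; simp [Pi.add_apply, smul_add, Finset.sum_add_distrib]
      map_smul' := by
        intro b w
        simp only [Pi.smul_apply, RingHom.id_apply, Finset.smul_sum]
        exact Finset.sum_congr rfl fun i _ => smul_comm _ _ _ }
  have hεφ : ∀ b' : B, εN (φ b') = b' • x := by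
    intro b'
    show ∑ i, bas.repr x i • b' • bas i = b' • x
    rw [show ∑ i, bas.repr x i • b' • bas i = b' • ∑ i, bas.repr x i • bas i by
      rw [Finset.smul_sum]; exact Finset.sum_congr rfl fun i _ => smul_comm _ _ _]
    rw [Module.Basis.sum_repr]
  have hmem : ∀ w : W, εN (w : Fin n → N) ∈ L := by
    rintro ⟨w, b', rfl⟩
    rw [hεφ]
    exact L.smul_mem b' hx
  let ε : W →ₗ[B] L := (εN.comp W.subtype).codRestrict L hmem
  have hε : ∀ b' : B, (hw : φ b' ∈ W) → (ε ⟨φ b', hw⟩ : N) = b' • x := fun b' hw => hεφ b'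
  have hbx : (ε ⟨(u : Fin n → N), u.2⟩ : N) = b • x := by
    have : (⟨(u : Fin n → N), u.2⟩ : W) = ⟨φ b, hb ▸ LinearMap.mem_range_self φ b⟩ := by
      exact Subtype.ext hb.symm
    rw [this, hε]
  -- generic vanishing: ε vanishes on any sSup of simples not isomorphic to L
  have hvanish : ∀ (𝒮 : Set (Submodule B W)),
      (∀ L' ∈ 𝒮, IsSimpleModule B L' ∧ IsEmpty (L' ≃ₗ[B] L)) →
      ∀ w ∈ sSup 𝒮, ε w = 0 := by
    intro 𝒮 h𝒮 w hw
    have hker : sSup 𝒮 ≤ LinearMap.ker ε := by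
      refine sSup_le fun L' hL' => ?_
      haveI := (h𝒮 L' hL').1
      have hz : ε.comp L'.subtype = 0 := by
        rcases LinearMap.bijective_or_eq_zero (R := B) (M := ↥L') (N := ↥L) (ε.comp L'.subtype) with h | h
        · exact absurd ((h𝒮 L' hL').2.false (LinearEquiv.ofBijective _ h)) not_false
        · exact h
      intro y hy
      have := congrArg (fun f => f ⟨y, hy⟩) hz
      simpa using this
    exact hker hw
  constructor
  · intro hiso
    have hεv : ε v = 0 := by
      refine hvanish _ (fun L' hL' => ⟨hL'.1, ⟨fun e => hL'.2 ⟨e.trans hiso.some⟩⟩⟩) v hv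
    have hεw₀ : (ε ⟨φ 1, hw₀⟩ : N) = x := by rw [hε]; exact one_smul B x
    have : ε ⟨φ 1, hw₀⟩ = ε ⟨(u : Fin n → N), u.2⟩ + ε v := by
      rw [← map_add]; congr 1; exact Subtype.ext (by rw [← huv])
    rw [hεv, add_zero] at this
    have h2 := Subtype.ext_iff.mp this
    rw [hεw₀, hbx] at h2
    exact h2.symm
  · intro hniso
    have hεu : ε ⟨(u : Fin n → N), u.2⟩ = 0 :=
      hvanish {L' | IsSimpleModule B L' ∧ Nonempty (L' ≃ₗ[B] S₀)}
        (fun L' hL' => ⟨hL'.1, ⟨fun e => hniso ⟨e.symm.trans hL'.2.some⟩⟩⟩) _ hu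
    have h2 := Subtype.ext_iff.mp hεu
    rw [hbx] at h2
    simpa using h2


lemma bn_trace_eq_of_equiv {F B V V' : Type*} [Field F] [Ring B] [Algebra F B]
    [AddCommGroup V] [Module B V] [Module F V] [IsScalarTower F B V]
    [AddCommGroup V'] [Module B V'] [Module F V'] [IsScalarTower F B V']
    (e : V ≃ₗ[B] V') (a : B) :
    LinearMap.trace F V (Algebra.lsmul F F V a : V →ₗ[F] V) =
      LinearMap.trace F V' (Algebra.lsmul F F V' a : V' →ₗ[F] V') := by
  let eF : V ≃ₗ[F] V' := e.restrictScalars F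
  have h : (Algebra.lsmul F F V' a : V' →ₗ[F] V') = eF.conj (Algebra.lsmul F F V a) := by
    ext x
    simp only [LinearEquiv.conj_apply, LinearMap.coe_comp, Function.comp_apply,
      Algebra.lsmul_coe, LinearEquiv.coe_coe]
    show a • x = eF (a • eF.symm x)
    have : eF (a • eF.symm x) = a • eF (eF.symm x) := e.map_smul a (eF.symm x)
    rw [this, LinearEquiv.apply_symm_apply]
  rw [h, LinearMap.trace_conj']

lemma bn_lsmul_prod {F B V V' : Type*} [Field F] [Ring B] [Algebra F B]
    [AddCommGroup V] [Module B V] [Module F V] [IsScalarTower F B V]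
    [AddCommGroup V'] [Module B V'] [Module F V'] [IsScalarTower F B V'] (a : B) :
    (Algebra.lsmul F F (V × V') a : V × V' →ₗ[F] V × V') =
      LinearMap.prodMap (Algebra.lsmul F F V a) (Algebra.lsmul F F V' a) :=
  LinearMap.ext fun x => rfl

lemma bn_cast_inj {F : Type*} [Field F] {m₁ m₂ r : ℕ}
    (hchar : ringChar F = 0 ∨ ((ringChar F).Prime ∧ r < ringChar F))
    (h₁ : m₁ ≤ r) (h₂ : m₂ ≤ r) (h : (m₁ : F) = (m₂ : F)) : m₁ = m₂ := by
  haveI : CharP F (ringChar F) := ringChar.charP F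
  rcases hchar with h0 | ⟨hp, hlt⟩
  · haveI : CharP F 0 := h0 ▸ ringChar.charP F
    haveI : CharZero F := CharP.charP_to_charZero F
    exact Nat.cast_injective h
  · have := (CharP.natCast_eq_natCast F (ringChar F)).1 h
    have := this.eq_of_lt_of_lt (lt_of_le_of_lt h₁ hlt) (lt_of_le_of_lt h₂ hlt)
    exact this

lemma bn_prod_ss {B : Type*} [Ring B] {N N' : Type*} [AddCommGroup N] [Module B N]
    [AddCommGroup N'] [Module B N']
    [IsSemisimpleModule B N] [IsSemisimpleModule B N'] : IsSemisimpleModule B (N × N') := by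
  rw [← Submodule.topEquiv.isSemisimpleModule_iff_of_bijective (LinearEquiv.bijective _),
    ← LinearMap.sup_range_inl_inr]
  exact .sup (.range _) (.range _)

set_option maxHeartbeats 1000000 in
lemma bn_main (n : ℕ) {F : Type u} {B : Type v} {M : Type w} {M' : Type w'}
    [Field F] [Ring B] [Algebra F B]
    [AddCommGroup M] [Module B M] [Module F M] [IsScalarTower F B M]
    [AddCommGroup M'] [Module B M'] [Module F M'] [IsScalarTower F B M']
    [FiniteDimensional F M] [FiniteDimensional F M']
    [IsSemisimpleModule B M] [IsSemisimpleModule B M']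
    (hr : Module.finrank F M = n)
    (hdim : Module.finrank F M = Module.finrank F M')
    (hchar : ringChar F = 0 ∨ ((ringChar F).Prime ∧ Module.finrank F M < ringChar F))
    (htr : ∀ a : B,
      LinearMap.trace F M (Algebra.lsmul F F M a : M →ₗ[F] M) =
        LinearMap.trace F M' (Algebra.lsmul F F M' a : M' →ₗ[F] M')) :
    Nonempty (M ≃ₗ[B] M') := by
  induction n using Nat.strong_induction_on generalizing M M' with
  | _ n IH =>
  rcases Nat.eq_zero_or_pos n with h0 | hpos
  · subst h0
    haveI : Subsingleton M := by
      rw [← Module.finrank_zero_iff (R := F)]; exact hr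
    haveI : Subsingleton M' := by
      rw [← Module.finrank_zero_iff (R := F)]; omega
    exact ⟨LinearEquiv.ofBijective 0
      ⟨fun a b _ => Subsingleton.elim a b, fun y => ⟨0, Subsingleton.elim _ _⟩⟩⟩
  · haveI : Nontrivial M := by
      rw [← Module.finrank_pos_iff (R := F)]
      exact hr ▸ hpos
    obtain ⟨S, hS⟩ := IsSemisimpleModule.exists_simple_submodule B M
    haveI : IsSemisimpleModule B (M × M') := bn_prod_ss
    obtain ⟨b, hb⟩ := bn_key (F := F) (B := B) (N := M × M') (S₀ := ↥S)
    -- transfer to simple submodules of M and M'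
    have hbM : ∀ L : Submodule B M, IsSimpleModule B L → ∀ x ∈ L,
        (Nonempty (L ≃ₗ[B] S) → b • x = x) ∧ (¬ Nonempty (L ≃ₗ[B] S) → b • x = 0) := by
      intro L hL x hx
      have hinj : Function.Injective (LinearMap.inl B M M') := LinearMap.inl_injective
      let e := Submodule.equivMapOfInjective (LinearMap.inl B M M') hinj L
      haveI : IsSimpleModule B (L.map (LinearMap.inl B M M')) := IsSimpleModule.congr e.symm
      have hx' : (x, (0 : M')) ∈ L.map (LinearMap.inl B M M') := ⟨x, hx, rfl⟩
      have := hb (L.map (LinearMap.inl B M M')) inferInstance (x, 0) hx'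
      constructor
      · intro ⟨f⟩
        have h1 : b • (x, (0:M')) = (x, 0) := this.1 ⟨e.symm.trans f⟩
        have := congrArg Prod.fst h1
        simpa using this
      · intro hn
        have h1 : b • (x, (0:M')) = 0 := this.2 fun ⟨f⟩ => hn ⟨e.trans f⟩
        have := congrArg Prod.fst h1
        simpa using this
    have hbM' : ∀ L : Submodule B M', IsSimpleModule B L → ∀ x ∈ L,
        (Nonempty (L ≃ₗ[B] S) → b • x = x) ∧ (¬ Nonempty (L ≃ₗ[B] S) → b • x = 0) := by
      intro L hL x hx
      have hinj : Function.Injective (LinearMap.inr B M M') := LinearMap.inr_injective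
      let e := Submodule.equivMapOfInjective (LinearMap.inr B M M') hinj L
      haveI : IsSimpleModule B (L.map (LinearMap.inr B M M')) := IsSimpleModule.congr e.symm
      have hx' : ((0 : M), x) ∈ L.map (LinearMap.inr B M M') := ⟨x, hx, rfl⟩
      have := hb (L.map (LinearMap.inr B M M')) inferInstance (0, x) hx'
      constructor
      · intro ⟨f⟩
        have h1 : b • ((0:M), x) = (0, x) := this.1 ⟨e.symm.trans f⟩
        have := congrArg Prod.snd h1
        simpa using this
      · intro hn
        have h1 : b • ((0:M), x) = 0 := this.2 fun ⟨f⟩ => hn ⟨e.trans f⟩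
        have := congrArg Prod.snd h1
        simpa using this
    -- b acts idempotently on M and M'
    have hidem : ∀ x : M, b • b • x = b • x := by
      intro x
      have hx : x ∈ (⊤ : Submodule B M) := Submodule.mem_top
      rw [← IsSemisimpleModule.sSup_simples_eq_top B M, sSup_eq_iSup'] at hx
      refine Submodule.iSup_induction _ (motive := fun y => b • b • y = b • y) hx ?_ (by simp) ?_
      · rintro ⟨L, hL⟩ y hy
        by_cases hiso : Nonempty (L ≃ₗ[B] S)
        · rw [(hbM L hL y hy).1 hiso, (hbM L hL y hy).1 hiso]
        · rw [(hbM L hL y hy).2 hiso, smul_zero]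
      · intro y z hy hz; rw [smul_add, smul_add, hy, hz]
    have hidem' : ∀ x : M', b • b • x = b • x := by
      intro x
      have hx : x ∈ (⊤ : Submodule B M') := Submodule.mem_top
      rw [← IsSemisimpleModule.sSup_simples_eq_top B M', sSup_eq_iSup'] at hx
      refine Submodule.iSup_induction _ (motive := fun y => b • b • y = b • y) hx ?_ (by simp) ?_
      · rintro ⟨L, hL⟩ y hy
        by_cases hiso : Nonempty (L ≃ₗ[B] S)
        · rw [(hbM' L hL y hy).1 hiso, (hbM' L hL y hy).1 hiso]
        · rw [(hbM' L hL y hy).2 hiso, smul_zero]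
      · intro y z hy hz; rw [smul_add, smul_add, hy, hz]
    -- projections
    set π : M →ₗ[F] M := Algebra.lsmul F F M b with hπ
    set π' : M' →ₗ[F] M' := Algebra.lsmul F F M' b with hπ'
    have hπap : ∀ x : M, π x = b • x := fun x => rfl
    have hπap' : ∀ x : M', π' x = b • x := fun x => rfl
    have hproj : LinearMap.IsProj (LinearMap.range π) π :=
      ⟨fun x => LinearMap.mem_range_self _ x, by rintro x ⟨y, rfl⟩; exact hidem y⟩
    have hproj' : LinearMap.IsProj (LinearMap.range π') π' :=
      ⟨fun x => LinearMap.mem_range_self _ x, by rintro x ⟨y, rfl⟩; exact hidem' y⟩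
    set m₁ := Module.finrank F ↥(LinearMap.range π) with hm₁
    set m₂ := Module.finrank F ↥(LinearMap.range π') with hm₂
    have htrM : LinearMap.trace F M π = (m₁ : F) := hproj.trace
    have htrM' : LinearMap.trace F M' π' = (m₂ : F) := hproj'.trace
    have heq : (m₁ : F) = (m₂ : F) := by rw [← htrM, ← htrM']; exact htr b
    have hmm : m₁ = m₂ := by
      refine bn_cast_inj hchar (Submodule.finrank_le _) ?_ heq
      rw [hdim]; exact Submodule.finrank_le _
    -- m₁ > 0
    haveI := hS.nontrivial
    obtain ⟨⟨x₀, hx₀⟩, hx₀ne⟩ := exists_ne (0 : ↥S)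
    have hx₀fix : π x₀ = x₀ := (hbM S hS x₀ hx₀).1 ⟨LinearEquiv.refl B S⟩
    have hx₀ne' : x₀ ≠ 0 := fun h => hx₀ne (Subtype.ext h)
    haveI : Nontrivial ↥(LinearMap.range π) :=
      ⟨⟨x₀, hx₀fix ▸ LinearMap.mem_range_self π x₀⟩, 0, fun h => hx₀ne' (by
        simpa using congrArg (fun z : ↥(LinearMap.range π) => (z : M)) h)⟩
    have hm₁pos : 0 < m₁ := Module.finrank_pos
    -- hence some y with b • y ≠ 0 in M'
    haveI : Nontrivial ↥(LinearMap.range π') := by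
      rw [← Module.finrank_pos_iff (R := F)]
      omega
    obtain ⟨z₁, z₂, hz⟩ := exists_pair_ne ↥(LinearMap.range π')
    have hy : ∃ y : M', b • y ≠ 0 := by
      by_contra hcon
      push_neg at hcon
      apply hz
      apply Subtype.ext
      obtain ⟨y₁, hy₁⟩ := z₁.2
      obtain ⟨y₂, hy₂⟩ := z₂.2
      rw [← hy₁, ← hy₂, hπap', hπap', hcon, hcon]
    -- a simple submodule of M' isomorphic to S exists
    have hexS' : ∃ L : Submodule B M', IsSimpleModule B L ∧ Nonempty (L ≃ₗ[B] S) := by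
      by_contra hcon
      push_neg at hcon
      obtain ⟨y, hyne⟩ := hy
      refine hyne ?_
      have hx : y ∈ (⊤ : Submodule B M') := Submodule.mem_top
      rw [← IsSemisimpleModule.sSup_simples_eq_top B M', sSup_eq_iSup'] at hx
      refine Submodule.iSup_induction _ (motive := fun y => b • y = 0) hx ?_ (by simp) ?_
      · rintro ⟨L, hL⟩ w hw
        exact (hbM' L hL w hw).2 (not_nonempty_iff.mpr (hcon L hL))
      · intro w z hw hz; rw [smul_add, hw, hz, add_zero]
    obtain ⟨S', hS', ⟨e₀⟩⟩ := hexS'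
    -- complements
    obtain ⟨c, hc⟩ := exists_isCompl S
    obtain ⟨c', hc'⟩ := exists_isCompl S'
    let eM : (↥S × ↥c) ≃ₗ[B] M := Submodule.prodEquivOfIsCompl S c hc
    let eM' : (↥S' × ↥c') ≃ₗ[B] M' := Submodule.prodEquivOfIsCompl S' c' hc'
    haveI : FiniteDimensional F ↥S :=
      FiniteDimensional.of_injective (S.subtype.restrictScalars F) Subtype.coe_injective
    haveI : FiniteDimensional F ↥c :=
      FiniteDimensional.of_injective (c.subtype.restrictScalars F) Subtype.coe_injective
    haveI : FiniteDimensional F ↥S' :=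
      FiniteDimensional.of_injective (S'.subtype.restrictScalars F) Subtype.coe_injective
    haveI : FiniteDimensional F ↥c' :=
      FiniteDimensional.of_injective (c'.subtype.restrictScalars F) Subtype.coe_injective
    have hfS : Module.finrank F M = Module.finrank F ↥S + Module.finrank F ↥c := by
      rw [← (eM.restrictScalars F).finrank_eq, Module.finrank_prod]
    have hfS' : Module.finrank F M' = Module.finrank F ↥S' + Module.finrank F ↥c' := by
      rw [← (eM'.restrictScalars F).finrank_eq, Module.finrank_prod]
    have hSS' : Module.finrank F ↥S' = Module.finrank F ↥S :=
      (e₀.restrictScalars F).finrank_eq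
    have hSpos : 0 < Module.finrank F ↥S := Module.finrank_pos
    -- traces on complements agree
    have htrc : ∀ a : B,
        LinearMap.trace F ↥c (Algebra.lsmul F F ↥c a : ↥c →ₗ[F] ↥c) =
          LinearMap.trace F ↥c' (Algebra.lsmul F F ↥c' a : ↥c' →ₗ[F] ↥c') := by
      intro a
      have h1 : LinearMap.trace F M (Algebra.lsmul F F M a : M →ₗ[F] M) =
          LinearMap.trace F ↥S (Algebra.lsmul F F ↥S a : ↥S →ₗ[F] ↥S) +
          LinearMap.trace F ↥c (Algebra.lsmul F F ↥c a : ↥c →ₗ[F] ↥c) := by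
        rw [← bn_trace_eq_of_equiv eM a, bn_lsmul_prod, LinearMap.trace_prodMap']
      have h2 : LinearMap.trace F M' (Algebra.lsmul F F M' a : M' →ₗ[F] M') =
          LinearMap.trace F ↥S' (Algebra.lsmul F F ↥S' a : ↥S' →ₗ[F] ↥S') +
          LinearMap.trace F ↥c' (Algebra.lsmul F F ↥c' a : ↥c' →ₗ[F] ↥c') := by
        rw [← bn_trace_eq_of_equiv eM' a, bn_lsmul_prod, LinearMap.trace_prodMap']
      have h3 := bn_trace_eq_of_equiv (F := F) e₀ a
      have h4 := htr a
      rw [h1, h2, h3] at h4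
      exact add_left_cancel h4
    -- apply induction hypothesis
    have hclt : Module.finrank F ↥c < n := by omega
    have hdimc : Module.finrank F ↥c = Module.finrank F ↥c' := by omega
    have hcharc : ringChar F = 0 ∨
        ((ringChar F).Prime ∧ Module.finrank F ↥c < ringChar F) := by
      rcases hchar with h | ⟨hp, hlt⟩
      · exact Or.inl h
      · exact Or.inr ⟨hp, by omega⟩
    obtain ⟨e₁⟩ := IH (Module.finrank F ↥c) hclt rfl hdimc hcharc htrc
    exact ⟨eM.symm.trans ((e₀.symm.prodCongr e₁).trans eM')⟩

/-- **Brauer–Nesbitt via traces.**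
Let `F` be a field, `B` an associative unital `F`-algebra, and `M`, `M'` semisimple left
`B`-modules that are finite dimensional over `F` with `r := dim_F M = dim_F M'`.  Assume either
that `F` has characteristic `0`, or that `F` has characteristic `p > 0` and `r < p`.  Then
`M ≅ M'` as `B`-modules iff for every `a ∈ B` the trace of the `F`-linear endomorphism
`x ↦ a • x` of `M` equals that of `M'`. -/
theorem stmt2 {F B M M' : Type*} [Field F] [Ring B] [Algebra F B]
    [AddCommGroup M] [Module B M] [Module F M] [IsScalarTower F B M]
    [AddCommGroup M'] [Module B M'] [Module F M'] [IsScalarTower F B M']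
    [FiniteDimensional F M] [FiniteDimensional F M']
    [IsSemisimpleModule B M] [IsSemisimpleModule B M']
    (hdim : Module.finrank F M = Module.finrank F M')
    (hchar : ringChar F = 0 ∨
      ((ringChar F).Prime ∧ Module.finrank F M < ringChar F)) :
    Nonempty (M ≃ₗ[B] M') ↔
      ∀ a : B,
        LinearMap.trace F M (Algebra.lsmul F F M a : M →ₗ[F] M) =
          LinearMap.trace F M' (Algebra.lsmul F F M' a : M' →ₗ[F] M') := by
  constructor
  · rintro ⟨e⟩ a
    exact bn_trace_eq_of_equiv (F := F) e a
  · intro h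
    exact bn_main (Module.finrank F M) rfl hdim hchar h
end

section
/- Let B be an associative unital ring and M a semisimple left B-module which is finitely generated as a left module over its endomorphism ring End_B(M) (acting on M by evaluation). Then every element of the bicommutant of M is a homothety: for every additive endomorphism f : M → M satisfying f ∘ g = g ∘ f for all B-linear endomorphisms g of M, there exists a ∈ B such that f(x) = a • x for all x ∈ M. -/
section Aux

variable {B M : Type*} [Ring B] [AddCommGroup M] [Module B M]

lemma pi_semisimple [IsSemisimpleModule B M] (n : ℕ) :
    IsSemisimpleModule B (Fin n → M) := by
  apply isSemisimpleModule_of_isSemisimpleModule_submodule'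
    (p := fun i : Fin n => LinearMap.range (LinearMap.single B (fun _ : Fin n => M) i))
  · intro i
    exact IsSemisimpleModule.congr
      (LinearEquiv.ofInjective _ (Pi.single_injective (M := fun _ : Fin n => M) i)).symm
  · simp_rw [LinearMap.range_eq_map, Submodule.iSup_map_single, Submodule.pi_top]

theorem stmt3' [IsSemisimpleModule B M] [Module.Finite (Module.End B M) M]
    (f : M →+ M) (hf : ∀ g : Module.End B M, ∀ x : M, f (g x) = g (f x)) :
    ∃ a : B, ∀ x : M, f x = a • x := by
  classical
  obtain ⟨n, v, hv⟩ := Module.Finite.exists_fin (R := Module.End B M) (M := M)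
  haveI := pi_semisimple (B := B) (M := M) n
  set N : Submodule B (Fin n → M) := Submodule.span B {v} with hN
  obtain ⟨q, hq⟩ := exists_isCompl N
  set π : (Fin n → M) →ₗ[B] (Fin n → M) := N.subtype.comp (Submodule.projectionOnto N q hq)
  have hπv : π v = v := by
    simp [π, Submodule.projectionOnto_apply_left hq
      ⟨v, Submodule.mem_span_singleton_self v⟩]
  -- commuting with diagonal f
  have key : ∀ w : Fin n → M, ∀ j, π (fun i => f (w i)) j = f (π w j) := by
    intro w j
    have hw : ∀ u : Fin n → M, π u j = ∑ i, ((LinearMap.proj j) ∘ₗ π ∘ₗ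
        (LinearMap.single B (fun _ : Fin n => M) i)) (u i) := by
      intro u
      conv_lhs => rw [← Finset.univ_sum_single u]
      simp [Finset.sum_apply]
    rw [hw, hw, map_sum]
    refine Finset.sum_congr rfl fun i _ => ?_
    exact (hf _ (w i)).symm
  have hfv : (fun i => f (v i)) ∈ N := by
    have h1 : π (fun i => f (v i)) = fun i => f (v i) := by
      funext j
      rw [key v j, hπv]
    rw [← h1]
    exact Submodule.coe_mem _
  rw [hN, Submodule.mem_span_singleton] at hfv
  obtain ⟨a, ha⟩ := hfv
  refine ⟨a, fun x => ?_⟩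
  have hx : x ∈ Submodule.span (Module.End B M) (Set.range v) := hv ▸ Submodule.mem_top
  induction hx using Submodule.span_induction with
  | mem x hxm =>
    obtain ⟨i, rfl⟩ := hxm
    exact congrFun ha.symm i
  | zero => simp
  | add x y _ _ hx hy => simp [map_add, hx, hy, smul_add]
  | smul g x _ hx =>
    show f (g x) = a • (g x)
    rw [hf g x, hx, map_smul]

end Aux

/-- **bicommutant of a semisimple module consists of homotheties.**
Let `B` be an associative unital ring and `M` a semisimple left `B`-module which is finitely
generated as a left module over its endomorphism ring `End_B(M)` (acting by evaluation).
Then every additive endomorphism `f : M → M` commuting with every `B`-linear endomorphism of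
`M` is a homothety: there exists `a ∈ B` with `f x = a • x` for all `x`. -/
theorem stmt3 {B M : Type*} [Ring B] [AddCommGroup M] [Module B M]
    [IsSemisimpleModule B M] [Module.Finite (Module.End B M) M]
    (f : M →+ M) (hf : ∀ g : Module.End B M, ∀ x : M, f (g x) = g (f x)) :
    ∃ a : B, ∀ x : M, f x = a • x := by
  exact stmt3' f hf
end

section
/- Let B be an associative unital ring and let M₁, …, Mₙ be simple left B-modules which are pairwise non-isomorphic and such that each Mᵢ is finitely generated as a left module over its endomorphism ring End_B(Mᵢ). Then for any choice of elements a₁, …, aₙ ∈ B there exists a single element a ∈ B such that a • x = aᵢ • x for every x ∈ Mᵢ and every 1 ≤ i ≤ n. -/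
/-- Let `B` be an associative unital ring and `M₁, …, Mₙ` simple left `B`-modules which are pairwise
non-isomorphic and such that each `Mᵢ` is finitely generated over its endomorphism ring
`End_B(Mᵢ)`.  Then for any `a₁, …, aₙ ∈ B` there is a single `a ∈ B` acting as `aᵢ` on each
`Mᵢ`. -/
theorem stmt4 {B : Type*} [Ring B] {n : ℕ} (M : Fin n → Type*)
    [∀ i, AddCommGroup (M i)] [∀ i, Module B (M i)]
    [∀ i, IsSimpleModule B (M i)]
    [∀ i, Module.Finite (Module.End B (M i)) (M i)]
    (hnoniso : ∀ i j : Fin n, i ≠ j → IsEmpty (M i ≃ₗ[B] M j))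
    (a : Fin n → B) :
    ∃ b : B, ∀ (i : Fin n) (x : M i), b • x = a i • x := by
  classical
  -- choose finite generating sets of each `M i` over its endomorphism ring
  have hgen : ∀ i : Fin n, ∃ (k : ℕ) (g : Fin k → M i),
      Submodule.span (Module.End B (M i)) (Set.range g) = ⊤ := fun i =>
    Module.Finite.exists_fin (R := Module.End B (M i)) (M := M i)
  choose k g hg using hgen
  -- the big module
  set ι := (Σ i : Fin n, Fin (k i)) with hι
  let N := ∀ q : ι, M q.1
  -- `N` is a semisimple `B`-module
  haveI hss : IsSemisimpleModule B N := by
    refine isSemisimpleModule_of_isSemisimpleModule_submodule'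
      (p := fun q : ι => LinearMap.range (LinearMap.single B (fun p : ι => M p.1) q)) ?_ ?_
    · intro q
      have hinj : Function.Injective (LinearMap.single B (fun p : ι => M p.1) q) := by
        rw [LinearMap.coe_single]
        exact Pi.single_injective q
      exact IsSemisimpleModule.congr
        (LinearEquiv.ofInjective (LinearMap.single B (fun p : ι => M p.1) q) hinj).symm
    · exact LinearMap.iSup_range_single B _
  -- the vector of generators and the target vector
  let v : N := fun q => g q.1 q.2
  let w : N := fun q => a q.1 • g q.1 q.2
  -- `w` lies in the cyclic submodule generated by `v`
  have hw : w ∈ Submodule.span B ({v} : Set N) := by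
    obtain ⟨C, hC⟩ := exists_isCompl (Submodule.span B ({v} : Set N))
    set W := Submodule.span B ({v} : Set N) with hW
    let π := Submodule.linearProjOfIsCompl W C hC
    let f : N →ₗ[B] N := LinearMap.id - W.subtype ∘ₗ π
    have hfv : f v = 0 := by
      have hvW : v ∈ W := Submodule.mem_span_singleton_self v
      show v - W.subtype (π v) = 0
      rw [show π v = ⟨v, hvW⟩ from Submodule.linearProjOfIsCompl_apply_left hC ⟨v, hvW⟩]
      simp
    -- component maps of `f`
    let φ : ∀ q q' : ι, M q'.1 →ₗ[B] M q.1 := fun q q' =>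
      (LinearMap.proj q) ∘ₗ f ∘ₗ (LinearMap.single B (fun p : ι => M p.1) q')
    have hφ : ∀ q q' : ι, q.1 ≠ q'.1 → φ q q' = 0 := by
      intro q q' h
      by_contra hne
      exact (hnoniso q'.1 q.1 (Ne.symm h)).false
        (LinearEquiv.ofBijective _ (LinearMap.bijective_of_ne_zero hne))
    have hsum : ∀ x : N, ∀ q : ι, f x q = ∑ q' : ι, φ q q' (x q') := by
      intro x q
      have hx : x = ∑ q' : ι, (LinearMap.single B (fun p : ι => M p.1) q') (x q') := by
        simp only [LinearMap.coe_single]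
        exact (Finset.univ_sum_single x).symm
      conv_lhs => rw [hx]
      rw [map_sum, Finset.sum_apply]
      rfl
    have hfw : f w = 0 := by
      funext q
      have : f w q = a q.1 • f v q := by
        rw [hsum, hsum, Finset.smul_sum]
        refine Finset.sum_congr rfl fun q' _ => ?_
        by_cases h : q.1 = q'.1
        · obtain ⟨i, j⟩ := q
          obtain ⟨i', j'⟩ := q'
          dsimp at h
          subst h
          show φ ⟨i, j⟩ ⟨i, j'⟩ (a i • g i j') = a i • φ ⟨i, j⟩ ⟨i, j'⟩ (g i j')
          exact map_smul _ _ _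
        · rw [hφ q q' h]
          simp
      rw [this, hfv]
      exact smul_zero _
    -- hence `w ∈ ker f = W`
    have : w - W.subtype (π w) = 0 := by
      have := hfw
      simpa [f, LinearMap.sub_apply] using this
    have hw' : w = W.subtype (π w) := by
      rwa [sub_eq_zero] at this
    rw [hw']
    exact (π w).2
  obtain ⟨b, hb⟩ := Submodule.mem_span_singleton.mp hw
  refine ⟨b, fun i x => ?_⟩
  -- `b` and `a i` agree on the generators of `M i`
  have hbg : ∀ j : Fin (k i), b • g i j = a i • g i j := by
    intro j
    have := congrFun hb ⟨i, j⟩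
    exact this
  -- extend to all of `M i` using the span over `End B (M i)`
  have hx : x ∈ Submodule.span (Module.End B (M i)) (Set.range (g i)) := by
    rw [hg i]; trivial
  refine Submodule.span_induction ?_ ?_ ?_ ?_ hx
  · rintro y ⟨j, rfl⟩
    exact hbg j
  · simp
  · intro y z _ _ hy hz
    rw [smul_add, smul_add, hy, hz]
  · intro φ y _ hy
    show b • (φ y) = a i • (φ y)
    rw [← map_smul, ← map_smul, hy]
end

section
/- Let H be a topological group and h ∈ H an element such that the subgroup generated by h is dense in H. Let F be a Hausdorff topological field and let ρ : H → GL(V) and ρ' : H → GL(V') be continuous representations of H on finite-dimensional F-vector spaces. If the characteristic polynomials of ρ(h) and ρ'(h) coincide, then for every s ∈ H the characteristic polynomials of ρ(s) and ρ'(s) coincide. -/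
open Polynomial Matrix

section AlgClosed
variable {K : Type*} [Field K] [IsAlgClosed K] {n : ℕ}

private lemma my_eval_charpoly (M : Matrix (Fin n) (Fin n) K) (r : K) :
    M.charpoly.eval r = (Matrix.scalar (Fin n) r - M).det := by
  rw [Matrix.charpoly, _root_.eval_det, matPolyEquiv_charmatrix]
  simp

private lemma my_scalar_eq (r : K) : Matrix.scalar (Fin n) r = r • (1 : Matrix (Fin n) (Fin n) K) := by
  ext i j
  simp [Matrix.scalar_apply, Matrix.diagonal, Matrix.one_apply, Matrix.smul_apply]

private lemma my_roots_card (M : Matrix (Fin n) (Fin n) K) : M.charpoly.roots.card = n := by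
  rw [(Polynomial.splits_iff_card_roots).mp (IsAlgClosed.splits M.charpoly),
    Matrix.charpoly_natDegree_eq_dim, Fintype.card_fin]

private lemma my_det_sub_scalar (M : Matrix (Fin n) (Fin n) K) (r : K) :
    (M - Matrix.scalar (Fin n) r).det = (M.charpoly.roots.map fun μ => μ - r).prod := by
  have hchar : M.charpoly = (M.charpoly.roots.map fun μ => X - C μ).prod :=
    (IsAlgClosed.splits M.charpoly).eq_prod_roots_of_monic M.charpoly_monic
  have h1 : (Matrix.scalar (Fin n) r - M).det = (M.charpoly.roots.map fun μ => r - μ).prod := by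
    rw [← my_eval_charpoly]
    conv_lhs => rw [hchar]
    rw [eval_multiset_prod, Multiset.map_map]
    simp
  have h2 : M - Matrix.scalar (Fin n) r = -(Matrix.scalar (Fin n) r - M) := by
    simp [neg_sub]
  rw [h2, Matrix.det_neg, h1, Fintype.card_fin]
  have h3 : (M.charpoly.roots.map fun μ => μ - r)
      = (M.charpoly.roots.map fun μ => r - μ).map Neg.neg := by
    rw [Multiset.map_map]; congr 1; funext μ; simp [neg_sub]
  rw [h3, Multiset.prod_map_neg, Multiset.card_map, my_roots_card M]

set_option linter.unusedSectionVars false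

private lemma my_det_aeval_multiset (M : Matrix (Fin n) (Fin n) K) (s : Multiset K[X]) :
    (Polynomial.aeval M s.prod).det = (s.map fun q => (Polynomial.aeval M q).det).prod := by
  induction s using Multiset.induction_on with
  | empty => simp
  | cons a s ih => simp [ih]

private lemma my_det_aeval (M : Matrix (Fin n) (Fin n) K) (g : K[X]) :
    (Polynomial.aeval M g).det = (M.charpoly.roots.map fun μ => g.eval μ).prod := by
  have hg : g = C g.leadingCoeff * (g.roots.map fun ν => X - C ν).prod :=
    (IsAlgClosed.splits g).eq_prod_roots
  have hgc : g.roots.card = g.natDegree :=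
    (Polynomial.splits_iff_card_roots).mp (IsAlgClosed.splits g)
  have hXC : ∀ ν : K, Polynomial.aeval M (X - C ν) = M - Matrix.scalar (Fin n) ν := by
    intro ν
    simp [map_sub, Polynomial.aeval_X, Polynomial.aeval_C, Matrix.scalar]
    rfl
  conv_lhs => rw [hg]
  rw [_root_.map_mul, Matrix.det_mul, Polynomial.aeval_C, my_det_aeval_multiset, Multiset.map_map]
  have h1 : (algebraMap K (Matrix (Fin n) (Fin n) K) g.leadingCoeff).det
      = g.leadingCoeff ^ n := by
    rw [show algebraMap K (Matrix (Fin n) (Fin n) K) g.leadingCoeff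
        = Matrix.scalar (Fin n) g.leadingCoeff from rfl, my_scalar_eq, Matrix.det_smul,
      det_one, mul_one, Fintype.card_fin]
  rw [h1]
  have h2 : ∀ ν ∈ g.roots, ((Polynomial.aeval M) (X - C ν)).det
      = (M.charpoly.roots.map fun μ => μ - ν).prod := by
    intro ν _
    rw [hXC, my_det_sub_scalar]
  rw [Multiset.map_congr rfl (fun ν hν => by simpa using h2 ν hν)]
  -- now: lc ^ n * ∏_{ν ∈ g.roots} ∏_{μ ∈ roots χ} (μ - ν) = ∏_{μ} eval μ g
  have h3 : ∀ μ : K, g.eval μ = g.leadingCoeff * (g.roots.map fun ν => μ - ν).prod := by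
    intro μ
    conv_lhs => rw [hg]
    rw [eval_mul, eval_C, eval_multiset_prod, Multiset.map_map]
    simp
  rw [Multiset.map_congr rfl (fun μ _ => h3 μ), Multiset.prod_map_mul]
  congr 1
  · rw [Multiset.map_const', Multiset.prod_replicate, my_roots_card]
  · -- Fubini: swap the two multiset products
    induction g.roots using Multiset.induction_on with
    | empty => simp
    | cons a s ih =>
        simp only [Multiset.map_cons, Multiset.prod_cons, Multiset.prod_map_mul, ← ih]

private lemma my_charpoly_npow (M : Matrix (Fin n) (Fin n) K) (m : ℕ) :
    (M ^ m).charpoly = (M.charpoly.roots.map fun μ => X - C (μ ^ m)).prod := by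
  apply Polynomial.funext
  intro y
  rw [my_eval_charpoly, eval_multiset_prod, Multiset.map_map]
  have h : Matrix.scalar (Fin n) y - M ^ m = Polynomial.aeval M (C y - X ^ m) := by
    simp only [map_sub, Polynomial.aeval_C, map_pow, Polynomial.aeval_X]
    rfl
  rw [h, my_det_aeval]
  rw [Multiset.map_congr rfl (fun μ _ => by simp : ∀ μ ∈ M.charpoly.roots,
    eval μ (C y - X ^ m) = (eval y ∘ fun μ => X - C (μ ^ m)) μ)]

private lemma my_roots_ne_zero (u : (Matrix (Fin n) (Fin n) K)ˣ) :
    ∀ μ ∈ Matrix.charpoly (u : Matrix (Fin n) (Fin n) K) |>.roots, μ ≠ 0 := by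
  intro μ hμ h0
  have hdet : ((u : Matrix (Fin n) (Fin n) K)).det ≠ 0 := by
    have h1 : (u : Matrix (Fin n) (Fin n) K).det * ((u⁻¹ : _ˣ) : Matrix (Fin n) (Fin n) K).det = 1 := by
      rw [← Matrix.det_mul, Units.mul_inv, Matrix.det_one]
    exact left_ne_zero_of_mul_eq_one h1
  rw [Matrix.det_eq_prod_roots_charpoly] at hdet
  exact hdet (Multiset.prod_eq_zero (h0 ▸ hμ))

private lemma my_charpoly_inv (u : (Matrix (Fin n) (Fin n) K)ˣ) :
    Matrix.charpoly ((u⁻¹ : _ˣ) : Matrix (Fin n) (Fin n) K)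
      = ((Matrix.charpoly (u : Matrix (Fin n) (Fin n) K)).roots.map
          fun μ => X - C μ⁻¹).prod := by
  set A : Matrix (Fin n) (Fin n) K := (u : Matrix (Fin n) (Fin n) K)
  set B : Matrix (Fin n) (Fin n) K := ((u⁻¹ : _ˣ) : Matrix (Fin n) (Fin n) K)
  have hdet1 : A.det * B.det = 1 := by
    rw [← Matrix.det_mul, Units.mul_inv, Matrix.det_one]
  apply Polynomial.funext
  intro y
  rw [my_eval_charpoly]
  have hfac : Matrix.scalar (Fin n) y - B = B * (y • A - 1) := by
    rw [my_scalar_eq, mul_sub, mul_smul_comm, mul_one]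
    have : B * A = 1 := Units.inv_mul u
    rw [this]
  have haev : y • A - 1 = Polynomial.aeval A (C y * X - 1) := by
    simp only [map_sub, _root_.map_mul, Polynomial.aeval_C, Polynomial.aeval_X, _root_.map_one]
    congr 1
    rw [show (algebraMap K (Matrix (Fin n) (Fin n) K)) y = Matrix.scalar (Fin n) y from rfl,
      my_scalar_eq, smul_mul_assoc, one_mul]
  rw [hfac, Matrix.det_mul, haev, my_det_aeval]
  rw [eval_multiset_prod, Multiset.map_map]
  have hAne : A.det ≠ 0 := left_ne_zero_of_mul_eq_one hdet1
  have hBdet : B.det = (A.charpoly.roots.map fun μ => μ⁻¹).prod := by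
    have hA : A.det = A.charpoly.roots.prod := Matrix.det_eq_prod_roots_charpoly A
    rw [Multiset.prod_map_inv, Multiset.map_id', ← hA]
    field_simp
    linear_combination hdet1
  rw [hBdet]
  have hne := my_roots_ne_zero u
  have hstep : ∀ μ ∈ A.charpoly.roots,
      (eval y ∘ fun μ => X - C μ⁻¹) μ = μ⁻¹ * (eval μ (C y * X - 1)) := by
    intro μ hμ
    have h0 : μ ≠ 0 := hne μ hμ
    simp only [Function.comp_apply, eval_sub, eval_X, eval_C, eval_mul, eval_one]
    field_simp
  rw [Multiset.map_congr rfl hstep, Multiset.prod_map_mul]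

private lemma my_charpoly_zpow (u : (Matrix (Fin n) (Fin n) K)ˣ) (k : ℤ) :
    Matrix.charpoly (((u ^ k : _ˣ)) : Matrix (Fin n) (Fin n) K)
      = ((Matrix.charpoly (u : Matrix (Fin n) (Fin n) K)).roots.map
          fun μ => X - C (μ ^ k)).prod := by
  cases k with
  | ofNat m =>
      rw [Int.ofNat_eq_coe, zpow_natCast, Units.val_pow_eq_pow_val, my_charpoly_npow]
      apply congrArg
      apply Multiset.map_congr rfl
      intro μ _
      rw [zpow_natCast]
  | negSucc m =>
      have h1 : u ^ (Int.negSucc m) = (u⁻¹) ^ (m + 1) := by rw [zpow_negSucc, inv_pow]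
      rw [h1, Units.val_pow_eq_pow_val, my_charpoly_npow]
      have h2 : (Matrix.charpoly ((u⁻¹ : _ˣ) : Matrix (Fin n) (Fin n) K)).roots
          = (Matrix.charpoly (u : Matrix (Fin n) (Fin n) K)).roots.map fun μ => μ⁻¹ := by
        rw [my_charpoly_inv,
          show (Multiset.map (fun μ => X - C μ⁻¹)
              (Matrix.charpoly (u : Matrix (Fin n) (Fin n) K)).roots)
            = ((Matrix.charpoly (u : Matrix (Fin n) (Fin n) K)).roots.map
                (fun μ => μ⁻¹)).map (fun a => X - C a) from by
            rw [Multiset.map_map]; rfl,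
          Polynomial.roots_multiset_prod_X_sub_C]
      rw [h2, Multiset.map_map]
      apply congrArg
      apply Multiset.map_congr rfl
      intro μ _
      simp only [Function.comp_apply, zpow_negSucc, inv_pow]

private lemma my_charpoly_zpow_eq_of_eq (u v : (Matrix (Fin n) (Fin n) K)ˣ)
    (huv : Matrix.charpoly (u : Matrix (Fin n) (Fin n) K)
      = Matrix.charpoly (v : Matrix (Fin n) (Fin n) K)) (k : ℤ) :
    Matrix.charpoly (((u ^ k : _ˣ)) : Matrix (Fin n) (Fin n) K)
      = Matrix.charpoly (((v ^ k : _ˣ)) : Matrix (Fin n) (Fin n) K) := by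
  rw [my_charpoly_zpow, my_charpoly_zpow, huv]

end AlgClosed

private lemma my_charpoly_zpow_eq_of_eq_field {F : Type*} [Field F] {n : ℕ}
    (u v : (Matrix (Fin n) (Fin n) F)ˣ)
    (huv : Matrix.charpoly (u : Matrix (Fin n) (Fin n) F)
      = Matrix.charpoly (v : Matrix (Fin n) (Fin n) F)) (k : ℤ) :
    Matrix.charpoly (((u ^ k : _ˣ)) : Matrix (Fin n) (Fin n) F)
      = Matrix.charpoly (((v ^ k : _ˣ)) : Matrix (Fin n) (Fin n) F) := by
  let K := AlgebraicClosure F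
  let φ : F →+* K := algebraMap F K
  let Φ : Matrix (Fin n) (Fin n) F →+* Matrix (Fin n) (Fin n) K := RingHom.mapMatrix φ
  let Ψ : (Matrix (Fin n) (Fin n) F)ˣ →* (Matrix (Fin n) (Fin n) K)ˣ :=
    Units.map Φ.toMonoidHom
  have hmap : ∀ (w : (Matrix (Fin n) (Fin n) F)ˣ) (j : ℤ),
      (Matrix.charpoly (((w ^ j : _ˣ)) : Matrix (Fin n) (Fin n) F)).map φ
        = Matrix.charpoly (((Ψ w ^ j : _ˣ)) : Matrix (Fin n) (Fin n) K) := by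
    intro w j
    rw [← Matrix.charpoly_map]
    congr 1
    rw [← map_zpow Ψ w j]
    rfl
  apply Polynomial.map_injective φ (RingHom.injective φ)
  rw [hmap, hmap]
  refine my_charpoly_zpow_eq_of_eq (Ψ u) (Ψ v) ?_ k
  have h1 : ((Ψ u : _ˣ) : Matrix (Fin n) (Fin n) K)
      = ((u : Matrix (Fin n) (Fin n) F)).map φ := rfl
  have h2 : ((Ψ v : _ˣ) : Matrix (Fin n) (Fin n) K)
      = ((v : Matrix (Fin n) (Fin n) F)).map φ := rfl
  rw [h1, h2, Matrix.charpoly_map, Matrix.charpoly_map, huv]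

private lemma my_continuous_charpoly_coeff {F : Type*} [CommRing F] [TopologicalSpace F]
    [IsTopologicalRing F] {n : ℕ} (i : ℕ) :
    Continuous fun M : Matrix (Fin n) (Fin n) F => (Matrix.charpoly M).coeff i := by
  have heq : ∀ M : Matrix (Fin n) (Fin n) F, (Matrix.charpoly M).coeff i
      = MvPolynomial.eval (fun p : (Fin n) × (Fin n) => M p.1 p.2)
          ((Matrix.charpoly.univ F (Fin n)).coeff i) := by
    intro M
    rw [show (MvPolynomial.eval (fun p : (Fin n) × (Fin n) => M p.1 p.2))
        = (MvPolynomial.eval₂Hom (RingHom.id F) (fun p : (Fin n) × (Fin n) => M p.1 p.2))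
        from rfl,
      Matrix.charpoly.univ_coeff_eval₂Hom]
    rfl
  simp only [heq]
  exact (MvPolynomial.continuous_eval _).comp
    (continuous_pi fun p => (continuous_apply p.2).comp (continuous_apply p.1))




/-- Let `H` be a topological group topologically generated by an element `h`, `F` a Hausdorff
topological field, and `ρ, ρ'` continuous finite-dimensional matrix representations of `H`
over `F`.  If the characteristic polynomials of `ρ h` and `ρ' h` coincide, then the
characteristic polynomials of `ρ s` and `ρ' s` coincide for every `s ∈ H`. -/
theorem stmt7 {H : Type*} [Group H] [TopologicalSpace H] [IsTopologicalGroup H]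
    (h : H) (hdense : Dense ((Subgroup.zpowers h : Subgroup H) : Set H))
    {F : Type*} [Field F] [TopologicalSpace F] [IsTopologicalRing F] [T2Space F]
    {n n' : ℕ}
    (ρ : H →* Matrix.GeneralLinearGroup (Fin n) F)
    (ρ' : H →* Matrix.GeneralLinearGroup (Fin n') F)
    (hρ : Continuous fun s : H => (ρ s : Matrix (Fin n) (Fin n) F))
    (hρ' : Continuous fun s : H => (ρ' s : Matrix (Fin n') (Fin n') F))
    (hh : Matrix.charpoly (ρ h : Matrix (Fin n) (Fin n) F) =
      Matrix.charpoly (ρ' h : Matrix (Fin n') (Fin n') F)) :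
    ∀ s : H, Matrix.charpoly (ρ s : Matrix (Fin n) (Fin n) F) =
      Matrix.charpoly (ρ' s : Matrix (Fin n') (Fin n') F) := by
  have hn : n = n' := by
    have h1 := congrArg Polynomial.natDegree hh
    rwa [Matrix.charpoly_natDegree_eq_dim, Matrix.charpoly_natDegree_eq_dim,
      Fintype.card_fin, Fintype.card_fin] at h1
  subst hn
  intro s
  set S : Set H := {s | Matrix.charpoly (ρ s : Matrix (Fin n) (Fin n) F)
    = Matrix.charpoly (ρ' s : Matrix (Fin n) (Fin n) F)} with hS
  have hSclosed : IsClosed S := by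
    have hiff : S = ⋂ i : ℕ, {s | (Matrix.charpoly (ρ s : Matrix (Fin n) (Fin n) F)).coeff i
        = (Matrix.charpoly (ρ' s : Matrix (Fin n) (Fin n) F)).coeff i} := by
      ext t
      simp only [hS, Set.mem_setOf_eq, Set.mem_iInter, Polynomial.ext_iff]
    rw [hiff]
    exact isClosed_iInter fun i => isClosed_eq
      ((my_continuous_charpoly_coeff i).comp hρ) ((my_continuous_charpoly_coeff i).comp hρ')
  have hsub : ((Subgroup.zpowers h : Subgroup H) : Set H) ⊆ S := by
    rintro x hx
    obtain ⟨k, rfl⟩ := Subgroup.mem_zpowers_iff.mp hx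
    show Matrix.charpoly _ = Matrix.charpoly _
    rw [map_zpow, map_zpow]
    exact my_charpoly_zpow_eq_of_eq_field (ρ h) (ρ' h) hh k
  have hmem : s ∈ S := closure_minimal hsub hSclosed (hdense s)
  exact hmem
end

section
/- Let F be a field, G a group, N ⊴ G a normal subgroup, and ρ : G → GL(V) a representation of G on a finite-dimensional F-vector space such that ρ(n) is unipotent (ρ(n) − id_V is nilpotent) for every n ∈ N. Then for every s ∈ G and every n ∈ N, the characteristic polynomial of ρ(s n) equals the characteristic polynomial of ρ(s). -/
open LinearMap Module Polynomial TensorProduct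

namespace Stmt9Aux

universe u v w

variable {K : Type u} {V : Type v} {G : Type w}
variable [Field K] [AddCommGroup V] [Module K V] [Group G]

/-- The span of the elements `ρ g - 1`. -/
noncomputable def A0 (ρ : G →* Module.End K V) : Submodule K (Module.End K V) :=
  Submodule.span K (Set.range fun g => ρ g - 1)

lemma mem_A0 (ρ : G →* Module.End K V) (g : G) : ρ g - 1 ∈ A0 ρ :=
  Submodule.subset_span ⟨g, rfl⟩

lemma A0_mul_left (ρ : G →* Module.End K V) (g : G) {x : Module.End K V}
    (hx : x ∈ A0 ρ) : ρ g * x ∈ A0 ρ := by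
  refine Submodule.span_induction ?_ ?_ ?_ ?_ hx
  · rintro _ ⟨h, rfl⟩
    have : ρ g * (ρ h - 1) = (ρ (g * h) - 1) - (ρ g - 1) := by
      rw [map_mul]; noncomm_ring
    rw [this]
    exact Submodule.sub_mem _ (mem_A0 ρ _) (mem_A0 ρ _)
  · simp only [mul_zero]; exact Submodule.zero_mem _
  · intro a b _ _ ha hb
    rw [mul_add]; exact Submodule.add_mem _ ha hb
  · intro c a _ ha
    rw [mul_smul_comm]; exact Submodule.smul_mem _ _ ha

lemma A0_mul_right (ρ : G →* Module.End K V) (g : G) {x : Module.End K V}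
    (hx : x ∈ A0 ρ) : x * ρ g ∈ A0 ρ := by
  refine Submodule.span_induction ?_ ?_ ?_ ?_ hx
  · rintro _ ⟨h, rfl⟩
    have : (ρ h - 1) * ρ g = (ρ (h * g) - 1) - (ρ g - 1) := by
      rw [map_mul]; noncomm_ring
    rw [this]
    exact Submodule.sub_mem _ (mem_A0 ρ _) (mem_A0 ρ _)
  · simp only [zero_mul]; exact Submodule.zero_mem _
  · intro a b _ _ ha hb
    rw [add_mul]; exact Submodule.add_mem _ ha hb
  · intro c a _ ha
    rw [smul_mul_assoc]; exact Submodule.smul_mem _ _ ha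

lemma A0_mul (ρ : G →* Module.End K V) {x y : Module.End K V}
    (hx : x ∈ A0 ρ) (hy : y ∈ A0 ρ) : x * y ∈ A0 ρ := by
  refine Submodule.span_induction ?_ ?_ ?_ ?_ hx
  · rintro _ ⟨h, rfl⟩
    have : (ρ h - 1) * y = ρ h * y - y := by noncomm_ring
    rw [this]
    exact Submodule.sub_mem _ (A0_mul_left ρ h hy) hy
  · simp only [zero_mul]; exact Submodule.zero_mem _
  · intro a b _ _ ha hb
    rw [add_mul]; exact Submodule.add_mem _ ha hb
  · intro c a _ ha
    rw [smul_mul_assoc]; exact Submodule.smul_mem _ _ ha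

lemma trace_A0 [FiniteDimensional K V] (ρ : G →* Module.End K V)
    (hu : ∀ g, IsNilpotent (ρ g - 1)) {x : Module.End K V} (hx : x ∈ A0 ρ) :
    trace K V x = 0 := by
  refine Submodule.span_induction ?_ ?_ ?_ ?_ hx
  · rintro _ ⟨h, rfl⟩
    exact (isNilpotent_trace_of_isNilpotent (hu h)).eq_zero
  · simp
  · intro a b _ _ ha hb; rw [map_add, ha, hb, add_zero]
  · intro c a _ ha; rw [map_smul, ha, smul_zero]


/-- Restriction of a representation to an invariant submodule, as a monoid hom. -/
noncomputable def resRep (ρ : G →* Module.End K V) (W : Submodule K V)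
    (hW : ∀ g, ∀ x ∈ W, ρ g x ∈ W) : G →* Module.End K W where
  toFun g := (ρ g).restrict (hW g)
  map_one' := by
    ext x
    simp [LinearMap.restrict_apply]
  map_mul' a b := by
    ext x
    simp [LinearMap.restrict_apply, Module.End.mul_apply]

lemma resRep_apply (ρ : G →* Module.End K V) (W : Submodule K V)
    (hW : ∀ g, ∀ x ∈ W, ρ g x ∈ W) (g : G) (x : W) :
    (resRep ρ W hW g x : V) = ρ g x := rfl

lemma pow_restrict_coe (f : Module.End K V) (W : Submodule K V)
    (hf : ∀ x ∈ W, f x ∈ W) (k : ℕ) (x : W) :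
    (((f.restrict hf) ^ k) x : V) = (f ^ k) (x : V) := by
  induction k generalizing x with
  | zero => simp
  | succ k ih =>
      rw [pow_succ, pow_succ, Module.End.mul_apply, Module.End.mul_apply,
        LinearMap.restrict_apply]
      rw [ih]

lemma resRep_unip (ρ : G →* Module.End K V) (W : Submodule K V)
    (hW : ∀ g, ∀ x ∈ W, ρ g x ∈ W) (hu : ∀ g, IsNilpotent (ρ g - 1)) (g : G) :
    IsNilpotent (resRep ρ W hW g - 1) := by
  obtain ⟨k, hk⟩ := hu g
  have hW' : ∀ x ∈ W, (ρ g - 1) x ∈ W := by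
    intro x hx
    simpa using W.sub_mem (hW g x hx) hx
  have hres : resRep ρ W hW g - 1 = (ρ g - 1).restrict hW' := by
    ext x
    simp [LinearMap.restrict_apply, resRep_apply]
  refine ⟨k, ?_⟩
  ext x
  rw [hres]
  have := pow_restrict_coe (ρ g - 1) W hW' k x
  simp only [this, hk]
  simp


/-- **Kolchin's theorem**: a group acting unipotently on a nonzero finite-dimensional
vector space over an algebraically closed field has a nonzero fixed vector. -/
theorem kolchin [IsAlgClosed K] (d : ℕ) :
    ∀ (V : Type v) [AddCommGroup V] [Module K V], ∀ [FiniteDimensional K V] [Nontrivial V],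
    finrank K V = d → ∀ (ρ : G →* Module.End K V), (∀ g, IsNilpotent (ρ g - 1)) →
    ∃ v : V, v ≠ 0 ∧ ∀ g, ρ g v = v := by
  induction d using Nat.strong_induction_on with
  | _ d IH =>
  intro V _ _ _ _ hd ρ hu
  by_cases hred : ∃ W : Submodule K V, W ≠ ⊥ ∧ W ≠ ⊤ ∧ ∀ g, ∀ x ∈ W, ρ g x ∈ W
  · obtain ⟨W, hW0, hWt, hWinv⟩ := hred
    haveI : Nontrivial W := Submodule.nontrivial_iff_ne_bot.mpr hW0
    have hlt : finrank K W < d := hd ▸ Submodule.finrank_lt hWt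
    obtain ⟨v, hv0, hvfix⟩ := IH (finrank K W) hlt W rfl (resRep ρ W hWinv)
      (resRep_unip ρ W hWinv hu)
    refine ⟨(v : V), fun h => hv0 (Subtype.ext h), fun g => ?_⟩
    rw [← resRep_apply ρ W hWinv g v, hvfix g]
  · have hirr : ∀ W : Submodule K V, (∀ g, ∀ x ∈ W, ρ g x ∈ W) → W = ⊥ ∨ W = ⊤ := by
      intro W hWinv
      by_contra h
      push_neg at h
      exact hred ⟨W, h.1, h.2, hWinv⟩
    have horb : ∀ v : V, v ≠ 0 → Submodule.span K (Set.range fun g => ρ g v) = ⊤ := by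
      intro v hv
      have hinv : ∀ g, ∀ x ∈ Submodule.span K (Set.range fun g => ρ g v),
          ρ g x ∈ Submodule.span K (Set.range fun g => ρ g v) := by
        intro g x hx
        refine Submodule.span_induction ?_ ?_ ?_ ?_ hx
        · rintro _ ⟨h, rfl⟩
          refine Submodule.subset_span ⟨g * h, ?_⟩
          show ρ (g * h) v = ρ g (ρ h v)
          rw [map_mul, Module.End.mul_apply]
        · simp
        · intro a b _ _ ha hb
          rw [map_add]; exact Submodule.add_mem _ ha hb
        · intro k a _ ha
          rw [map_smul]; exact Submodule.smul_mem _ _ ha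
      rcases hirr _ hinv with h | h
      · exfalso
        have hvmem : v ∈ Submodule.span K (Set.range fun g => ρ g v) :=
          Submodule.subset_span ⟨1, by show ρ (1 : G) v = v; rw [map_one, Module.End.one_apply]⟩
        rw [h, Submodule.mem_bot] at hvmem
        exact hv hvmem
      · exact h
    by_cases htriv : ∀ g, ρ g = 1
    · obtain ⟨v, hv⟩ := exists_ne (0 : V)
      exact ⟨v, hv, fun g => by rw [htriv g, Module.End.one_apply]⟩
    · push_neg at htriv
      obtain ⟨g₀, hg₀⟩ := htriv
      exfalso
      set S : Set ℕ := {r : ℕ | ∃ x, x ∈ A0 ρ ∧ x ≠ 0 ∧ finrank K (LinearMap.range x) = r}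
        with hSdef
      have hS : S.Nonempty := ⟨_, ρ g₀ - 1, mem_A0 ρ g₀, sub_ne_zero.mpr hg₀, rfl⟩
      obtain ⟨t, htA, ht0, htrk⟩ := Nat.sInf_mem hS
      have hmin : ∀ x, x ∈ A0 ρ → x ≠ 0 →
          finrank K (LinearMap.range t) ≤ finrank K (LinearMap.range x) := fun x hx h0 =>
        htrk ▸ Nat.sInf_le ⟨x, hx, h0, rfl⟩
      obtain ⟨u₁, hu₁⟩ : ∃ u, t u ≠ 0 := by
        by_contra h
        push_neg at h
        exact ht0 (LinearMap.ext fun x => by rw [h x, LinearMap.zero_apply])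
      have hrk1 : finrank K (LinearMap.range t) = 1 := by
        have hge : 1 ≤ finrank K (LinearMap.range t) := by
          rw [Nat.one_le_iff_ne_zero]
          intro h
          rw [Submodule.finrank_eq_zero, LinearMap.range_eq_bot] at h
          exact ht0 h
        by_contra hne
        have h2 : 2 ≤ finrank K (LinearMap.range t) := by omega
        have hg : ∃ g, t (ρ g (t u₁)) ∉ Submodule.span K {t u₁} := by
          by_contra h
          push_neg at h
          have hle : LinearMap.range t ≤ Submodule.span K {t u₁} := by
            rw [LinearMap.range_eq_map, ← horb (t u₁) hu₁, Submodule.map_span,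
              Submodule.span_le]
            rintro _ ⟨_, ⟨g, rfl⟩, rfl⟩
            exact h g
          have hm := Submodule.finrank_mono hle
          rw [finrank_span_singleton hu₁] at hm
          omega
        obtain ⟨g, hg⟩ := hg
        have hinvR : ∀ x ∈ LinearMap.range t,
            (t ∘ₗ (ρ g : Module.End K V)) x ∈ LinearMap.range t :=
          fun x _ => LinearMap.mem_range_self _ _
        haveI : Nontrivial (LinearMap.range t) := by
          rw [Submodule.nontrivial_iff_ne_bot, Ne, LinearMap.range_eq_bot]
          exact ht0
        set f' : Module.End K (LinearMap.range t) :=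
          (t ∘ₗ (ρ g : Module.End K V)).restrict hinvR with hf'
        obtain ⟨lam, hlam⟩ := Module.End.exists_eigenvalue f'
        obtain ⟨y, hy⟩ := hlam.exists_hasEigenvector
        set s : Module.End K V := t * ρ g * t - lam • t with hs
        have hsA : s ∈ A0 ρ :=
          Submodule.sub_mem _ (A0_mul ρ (A0_mul_right ρ g htA) htA)
            (Submodule.smul_mem _ _ htA)
        have hs0 : s ≠ 0 := by
          intro h
          apply hg
          have h1 : s u₁ = 0 := by rw [h, LinearMap.zero_apply]
          rw [hs] at h1
          simp only [LinearMap.sub_apply, LinearMap.smul_apply, Module.End.mul_apply,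
            sub_eq_zero] at h1
          rw [h1]
          exact Submodule.smul_mem _ _ (Submodule.mem_span_singleton_self _)
        set φ' : Module.End K (LinearMap.range t) := f' - lam • 1 with hφ'
        have hker : LinearMap.ker φ' ≠ ⊥ := by
          intro h
          have hymem : y ∈ LinearMap.ker φ' := by
            rw [LinearMap.mem_ker, hφ', LinearMap.sub_apply, sub_eq_zero,
              hy.apply_eq_smul]
            simp
          rw [h, Submodule.mem_bot] at hymem
          exact hy.2 hymem
        have hrange : LinearMap.range s ≤
            Submodule.map (LinearMap.range t).subtype (LinearMap.range φ') := by
          rintro _ ⟨x, rfl⟩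
          refine ⟨φ' ⟨t x, LinearMap.mem_range_self _ _⟩,
            LinearMap.mem_range_self _ _, ?_⟩
          show (φ' ⟨t x, _⟩ : V) = s x
          rw [hφ']
          simp only [LinearMap.sub_apply, LinearMap.smul_apply, Module.End.one_apply,
            AddSubgroupClass.coe_sub, SetLike.val_smul]
          rw [hf', LinearMap.restrict_coe_apply]
          simp only [LinearMap.comp_apply]
          rw [hs]
          simp only [LinearMap.sub_apply, LinearMap.smul_apply, Module.End.mul_apply]
        have h1 : finrank K (LinearMap.range s) ≤ finrank K (LinearMap.range φ') := by
          have := Submodule.finrank_mono hrange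
          rwa [Submodule.finrank_map_subtype_eq] at this
        have h2 : finrank K (LinearMap.range φ') < finrank K (LinearMap.range t) := by
          have h3 := LinearMap.finrank_range_add_finrank_ker φ'
          have h4 : 0 < finrank K (LinearMap.ker φ') := by
            rw [Nat.pos_iff_ne_zero]
            intro h
            rw [Submodule.finrank_eq_zero] at h
            exact hker h
          have h5 : finrank K (⊤ : Submodule K (LinearMap.range t)) =
              finrank K (LinearMap.range t) := finrank_top K _
          omega
        have := hmin s hsA hs0
        omega
      -- rank-one case
      set w := t u₁ with hwdef
      have hw : LinearMap.range t = Submodule.span K {w} := by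
        refine (Submodule.eq_of_le_of_finrank_le ?_ ?_).symm
        · rw [Submodule.span_le, Set.singleton_subset_iff]
          exact LinearMap.mem_range_self _ _
        · rw [hrk1, finrank_span_singleton hu₁]
      obtain ⟨ψ, hψ⟩ : ∃ ψ : Module.Dual K V, ψ w ≠ 0 := by
        by_contra h
        push_neg at h
        exact hu₁ ((Module.forall_dual_apply_eq_zero_iff K w).mp h)
      set c : V →ₗ[K] K := (ψ w)⁻¹ • (ψ ∘ₗ t) with hcdef
      have hc : ∀ x, t x = c x • w := by
        intro x
        obtain ⟨k, hk⟩ := Submodule.mem_span_singleton.mp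
          (hw ▸ LinearMap.mem_range_self t x)
        have hck : c x = k := by
          rw [hcdef]
          simp only [LinearMap.smul_apply, LinearMap.comp_apply, smul_eq_mul]
          rw [← hk, map_smul, smul_eq_mul]
          field_simp
        rw [hck, hk]
      have hcw : ∀ g, c (ρ g w) = 0 := by
        intro g
        have hz : (t * ρ g * t * ρ g : Module.End K V) ∈ A0 ρ :=
          A0_mul_right ρ g (A0_mul ρ (A0_mul_right ρ g htA) htA)
        have htr := trace_A0 ρ hu hz
        have hzeq : (t * ρ g * t * ρ g : Module.End K V) =
            dualTensorHom K V V
              ((c (ρ g w) • (c ∘ₗ (ρ g : Module.End K V))) ⊗ₜ[K] w) := by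
          ext x
          rw [dualTensorHom_apply]
          simp only [Module.End.mul_apply, LinearMap.smul_apply, LinearMap.comp_apply,
            smul_eq_mul]
          rw [hc (ρ g x), map_smul, map_smul, hc (ρ g w), smul_smul, mul_comm]
        rw [hzeq, trace_eq_contract_apply, contractLeft_apply] at htr
        simp only [LinearMap.smul_apply, LinearMap.comp_apply, smul_eq_mul] at htr
        exact mul_self_eq_zero.mp htr
      have hc0 : ∀ x, c x = 0 := by
        intro x
        have hx : x ∈ Submodule.span K (Set.range fun g => ρ g w) := by
          rw [horb w hu₁]; exact Submodule.mem_top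
        refine Submodule.span_induction ?_ ?_ ?_ ?_ hx
        · rintro _ ⟨g, rfl⟩; exact hcw g
        · simp
        · intro a b _ _ ha hb; rw [map_add, ha, hb, add_zero]
        · intro k a _ ha; rw [map_smul, ha, smul_zero]
      exact ht0 (LinearMap.ext fun x => by rw [hc x, hc0 x, zero_smul, LinearMap.zero_apply])


lemma charpoly_eq_restrict_mul_mapQ [FiniteDimensional K V] (W : Submodule K V)
    (f : Module.End K V) (hf : ∀ x ∈ W, f x ∈ W) :
    f.charpoly = (f.restrict hf).charpoly *
      (Submodule.mapQ W W f (fun x hx => hf x hx)).charpoly := by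
  classical
  obtain ⟨W', hcompl⟩ := Submodule.exists_isCompl W
  set e : (W × W') ≃ₗ[K] V := Submodule.prodEquivOfIsCompl W W' hcompl with he
  set Q : (V ⧸ W) ≃ₗ[K] W' := Submodule.quotientEquivOfIsCompl W W' hcompl with hQ
  set q : Module.End K (V ⧸ W) := Submodule.mapQ W W f (fun x hx => hf x hx) with hq
  set bW := Module.Free.chooseBasis K W with hbW
  set bW' := Module.Free.chooseBasis K W' with hbW'
  set b := bW.prod bW' with hb
  set g : Module.End K (W × W') := e.symm.conj f with hg
  -- basic facts about e
  have he1 : ∀ z : W × W', e z = (z.1 : V) + (z.2 : V) := fun z =>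
    Submodule.coe_prodEquivOfIsCompl' W W' hcompl z
  have heW : ∀ x : W, e.symm (x : V) = (x, 0) :=
    fun x => Submodule.prodEquivOfIsCompl_symm_apply_left W W' hcompl x
  have hQmk : ∀ x : V, Q (Submodule.Quotient.mk x) = (e.symm x).2 := by
    intro x
    obtain ⟨z, rfl⟩ : ∃ z, e z = x := ⟨e.symm x, e.apply_symm_apply x⟩
    rw [e.symm_apply_apply]
    have hmk : (Submodule.Quotient.mk (e z) : V ⧸ W) = Submodule.Quotient.mk ((z.2 : W') : V) := by
      rw [Submodule.Quotient.eq, he1, add_sub_cancel_right]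
      exact z.1.2
    rw [hmk]
    exact Submodule.quotientEquivOfIsCompl_apply_mk_right hcompl _
  have hbinl : ∀ j, b (Sum.inl j) = (bW j, 0) := fun j =>
    Prod.ext (bW.prod_apply_inl_fst bW' j) (bW.prod_apply_inl_snd bW' j)
  have hbinr : ∀ j, b (Sum.inr j) = (0, bW' j) := fun j =>
    Prod.ext (bW.prod_apply_inr_fst bW' j) (bW.prod_apply_inr_snd bW' j)
  -- the matrix of g
  set A := LinearMap.toMatrix b b g with hA
  have hginl : ∀ j, g (b (Sum.inl j)) = (f.restrict hf (bW j), 0) := by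
    intro j
    rw [hg, LinearEquiv.conj_apply, LinearEquiv.symm_symm, hbinl j]
    simp only [LinearMap.coe_comp, Function.comp_apply, LinearEquiv.coe_coe]
    have h0 : e (bW j, 0) = (bW j : V) := by rw [he1]; simp
    rw [h0]
    have : f (bW j : V) = ((f.restrict hf (bW j) : W) : V) := by
      rw [LinearMap.restrict_coe_apply]
    rw [this, heW]
  have hginr2 : ∀ j, (g (b (Sum.inr j))).2 = Q.conj q (bW' j) := by
    intro j
    rw [hg, LinearEquiv.conj_apply, LinearEquiv.symm_symm, hbinr j]
    simp only [LinearMap.coe_comp, Function.comp_apply, LinearEquiv.coe_coe]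
    have h0 : e (0, bW' j) = (bW' j : V) := by rw [he1]; simp
    rw [h0]
    rw [LinearEquiv.conj_apply, hQ]
    simp only [LinearMap.coe_comp, Function.comp_apply, LinearEquiv.coe_coe]
    rw [Submodule.quotientEquivOfIsCompl_symm_apply, ← hQ, hq, Submodule.mapQ_apply, hQmk]
  have hblock : A = Matrix.fromBlocks
      (LinearMap.toMatrix bW bW (f.restrict hf)) (A.toBlocks₁₂) 0
      (LinearMap.toMatrix bW' bW' (Q.conj q)) := by
    ext i j
    rcases i with i | i <;> rcases j with j | j
    · rw [Matrix.fromBlocks_apply₁₁, hA, LinearMap.toMatrix_apply, LinearMap.toMatrix_apply,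
        hginl j, hb, Basis.prod_repr_inl]
    · rw [Matrix.fromBlocks_apply₁₂]
      rfl
    · rw [Matrix.fromBlocks_apply₂₁, hA, LinearMap.toMatrix_apply, hginl j, hb,
        Basis.prod_repr_inr]
      simp
    · rw [Matrix.fromBlocks_apply₂₂, hA, LinearMap.toMatrix_apply, LinearMap.toMatrix_apply,
        hb, Basis.prod_repr_inr, hginr2 j]
  have step1 : f.charpoly = g.charpoly := (LinearEquiv.charpoly_conj e.symm f).symm
  have step2 : g.charpoly = A.charpoly := (LinearMap.charpoly_toMatrix g b).symm
  rw [step1, step2, hblock, Matrix.charpoly_fromBlocks_zero₂₁,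
    LinearMap.charpoly_toMatrix, LinearMap.charpoly_toMatrix,
    LinearEquiv.charpoly_conj]



/-- The representation induced on the quotient by an invariant submodule. -/
noncomputable def quotRep (ρ : G →* Module.End K V) (W : Submodule K V)
    (hW : ∀ g, ∀ x ∈ W, ρ g x ∈ W) : G →* Module.End K (V ⧸ W) where
  toFun g := Submodule.mapQ W W (ρ g) (fun x hx => hW g x hx)
  map_one' := by
    refine Submodule.linearMap_qext _ ?_
    ext x
    simp [Submodule.mapQ_apply]
  map_mul' a b := by
    refine Submodule.linearMap_qext _ ?_
    ext x
    simp [Submodule.mapQ_apply, Module.End.mul_apply, map_mul]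

lemma quotRep_apply (ρ : G →* Module.End K V) (W : Submodule K V)
    (hW : ∀ g, ∀ x ∈ W, ρ g x ∈ W) (g : G) (x : V) :
    quotRep ρ W hW g (Submodule.Quotient.mk x) = Submodule.Quotient.mk (ρ g x) := rfl

lemma quotRep_pow_sub_one (ρ : G →* Module.End K V) (W : Submodule K V)
    (hW : ∀ g, ∀ x ∈ W, ρ g x ∈ W) (g : G) (k : ℕ) (x : V) :
    ((quotRep ρ W hW g - 1) ^ k) (Submodule.Quotient.mk x) =
      Submodule.Quotient.mk (((ρ g - 1) ^ k) x) := by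
  induction k generalizing x with
  | zero => simp
  | succ k ih =>
      rw [pow_succ, pow_succ, Module.End.mul_apply, Module.End.mul_apply]
      have h1 : (quotRep ρ W hW g - 1) (Submodule.Quotient.mk x) =
          Submodule.Quotient.mk ((ρ g - 1) x) := by
        simp only [LinearMap.sub_apply, Module.End.one_apply, quotRep_apply,
          ← Submodule.Quotient.mk_sub]
      rw [h1, ih]

lemma quotRep_unip (ρ : G →* Module.End K V) (W : Submodule K V)
    (hW : ∀ g, ∀ x ∈ W, ρ g x ∈ W) (g : G) (hg : IsNilpotent (ρ g - 1)) :
    IsNilpotent (quotRep ρ W hW g - 1) := by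
  obtain ⟨k, hk⟩ := hg
  refine ⟨k, ?_⟩
  refine Submodule.linearMap_qext _ ?_
  ext x
  simp only [LinearMap.coe_comp, Function.comp_apply, Submodule.mkQ_apply,
    LinearMap.zero_comp, LinearMap.zero_apply]
  rw [quotRep_pow_sub_one, hk]
  simp

/-- The main theorem over an algebraically closed field. -/
theorem main_alg_closed [IsAlgClosed K] (d : ℕ) :
    ∀ (V : Type v) [AddCommGroup V] [Module K V], ∀ [FiniteDimensional K V],
    finrank K V = d →
    ∀ (N : Subgroup G), N.Normal → ∀ (ρ : G →* Module.End K V),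
    (∀ m ∈ N, IsNilpotent (ρ m - 1)) →
    ∀ (s n : G), n ∈ N →
    (ρ (s * n)).charpoly = (ρ s).charpoly := by
  induction d using Nat.strong_induction_on with
  | _ d IH =>
  intro V _ _ _ hd N hN ρ hu s n hn
  rcases subsingleton_or_nontrivial V with hV | hV
  · have : ρ (s * n) = ρ s := LinearMap.ext fun x => Subsingleton.elim _ _
    rw [this]
  · set W : Submodule K V := ⨅ (m : N), LinearMap.ker (ρ m - 1) with hW
    have hmemW : ∀ x : V, x ∈ W ↔ ∀ m : N, ρ m x = x := by
      intro x
      rw [hW]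
      simp only [Submodule.mem_iInf, LinearMap.mem_ker, LinearMap.sub_apply,
        Module.End.one_apply, sub_eq_zero]
    have hWinv : ∀ g, ∀ x ∈ W, ρ g x ∈ W := by
      intro g x hx
      rw [hmemW] at hx ⊢
      intro m
      have hmem : (g⁻¹ * (m : G) * g) ∈ N := by
        have := hN.conj_mem (m : G) m.2 g⁻¹
        simpa using this
      have : ρ (m : G) (ρ g x) = ρ g (ρ (g⁻¹ * (m : G) * g) x) := by
        rw [← Module.End.mul_apply, ← map_mul, ← Module.End.mul_apply, ← map_mul]
        congr 1
        group
      rw [this, hx ⟨_, hmem⟩]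
    have hWne : W ≠ ⊥ := by
      obtain ⟨v, hv0, hvfix⟩ := kolchin (G := N) (finrank K V) V rfl
        (ρ.comp N.subtype) (fun m => hu (m : G) m.2)
      intro h
      have hvW : v ∈ W := (hmemW v).mpr (fun m => hvfix m)
      rw [h, Submodule.mem_bot] at hvW
      exact hv0 hvW
    have h₁ : ∀ x ∈ W, ρ (s * n) x ∈ W := hWinv _
    have h₂ : ∀ x ∈ W, ρ s x ∈ W := hWinv _
    have hres : (ρ (s * n)).restrict h₁ = (ρ s).restrict h₂ := by
      ext x
      rw [LinearMap.restrict_coe_apply, LinearMap.restrict_coe_apply]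
      rw [map_mul, Module.End.mul_apply, (hmemW (x : V)).mp x.2 ⟨n, hn⟩]
    have hd' : finrank K (V ⧸ W) < d := by
      have hsum := Submodule.finrank_quotient_add_finrank W
      have hWpos : 0 < finrank K W := by
        rw [Nat.pos_iff_ne_zero]
        intro h
        rw [Submodule.finrank_eq_zero] at h
        exact hWne h
      omega
    have hq := IH _ hd' (V ⧸ W) rfl N hN (quotRep ρ W hWinv)
      (fun m hm => quotRep_unip ρ W hWinv m (hu m hm)) s n hn
    rw [charpoly_eq_restrict_mul_mapQ W (ρ (s * n)) h₁,
      charpoly_eq_restrict_mul_mapQ W (ρ s) h₂, hres]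
    have hq' : (Submodule.mapQ W W (ρ (s * n)) (fun x hx => h₁ x hx)).charpoly =
        (Submodule.mapQ W W (ρ s) (fun x hx => h₂ x hx)).charpoly := hq
    rw [hq']

end Stmt9Aux

open Stmt9Aux in
/-- Let `F` be a field, `G` a group, `N ⊴ G` a normal subgroup, and `ρ : G → GL(V)` a
representation on a finite-dimensional `F`-vector space such that `ρ n` is unipotent for every
`n ∈ N`.  Then for every `s ∈ G` and `n ∈ N` the characteristic polynomials of `ρ (s * n)` and
`ρ s` coincide. -/
theorem stmt9 {F G V : Type*} [Field F] [Group G]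
    [AddCommGroup V] [Module F V] [FiniteDimensional F V]
    (N : Subgroup G) (hN : N.Normal)
    (ρ : G →* (V ≃ₗ[F] V))
    (hunip : ∀ n ∈ N, IsNilpotent ((ρ n : V →ₗ[F] V) - LinearMap.id))
    (s : G) (n : G) (hn : n ∈ N) :
    LinearMap.charpoly ((ρ (s * n) : V →ₗ[F] V)) =
      LinearMap.charpoly ((ρ s : V →ₗ[F] V)) := by
  classical
  let K := AlgebraicClosure F
  let σ : G →* Module.End F V :=
    { toFun := fun g => (ρ g : V →ₗ[F] V)
      map_one' := by ext x; simp
      map_mul' := by intro a b; ext x; simp }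
  let τ : G →* Module.End K (K ⊗[F] V) :=
    (Module.End.baseChangeHom F K V).toRingHom.toMonoidHom.comp σ
  have hτ : ∀ g, τ g = (σ g).baseChange K := fun g => rfl
  have hτu : ∀ m ∈ N, IsNilpotent (τ m - 1) := by
    intro m hm
    obtain ⟨k, hk⟩ := hunip m hm
    have hfix : σ m - 1 = (ρ m : V →ₗ[F] V) - LinearMap.id := rfl
    have heq : τ m - 1 = (σ m - 1).baseChange K := by
      rw [hτ, LinearMap.baseChange_sub, LinearMap.baseChange_one]
    rw [heq]
    refine ⟨k, ?_⟩
    rw [← LinearMap.baseChange_pow, hfix, hk, LinearMap.baseChange_zero]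
  have hmain := main_alg_closed (G := G) (K := K) (finrank K (K ⊗[F] V)) (K ⊗[F] V) rfl
    N hN τ hτu s n hn
  rw [hτ, hτ, LinearMap.charpoly_baseChange, LinearMap.charpoly_baseChange] at hmain
  exact Polynomial.map_injective (algebraMap F K) (algebraMap F K).injective hmain
end

section
/- Let O be a discrete valuation ring with residue field k, and let R = O⟦z⟧ be the power series ring in one variable over O. Let f : M → M' be an injective R-linear map between finite free R-modules of the same rank such that z^n M' ⊆ f(M) for some positive integer n. Then the cokernel M'/f(M) is annihilated by z^n, is finitely presented as an R-module, and is finite free as an O-module. -/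
open PowerSeries

/-- Divisibility extraction: if `X^n * a = C α * b` in `O⟦X⟧`, then `C α ∣ a`. -/
lemma aux_X_pow_mul_eq_C_mul {O : Type*} [CommRing O] {n : ℕ} {a b : PowerSeries O} {α : O}
    (h : (X : PowerSeries O) ^ n * a = C α * b) :
    ∃ c : PowerSeries O, a = C α * c := by
  refine ⟨PowerSeries.mk fun k => coeff (k + n) b, ?_⟩
  ext k
  have : coeff (k + n) ((X : PowerSeries O) ^ n * a) = coeff (k + n) (C α * b) := by
    rw [h]
  rw [coeff_X_pow_mul] at this
  rw [this, coeff_C_mul, coeff_C_mul, coeff_mk]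

/-- **Lemma 4.5.**
Let `O` be a discrete valuation ring (with residue field `O ⧸ 𝔪`), and `R = O⟦z⟧`.  Let
`f : M → M'` be an injective `R`-linear map between finite free `R`-modules of the same rank
such that `z^n M' ⊆ f(M)` for some `n > 0`.  Then the cokernel `M' ⧸ f(M)` is annihilated by
`z^n`, is finitely presented as an `R`-module, and is finite free as an `O`-module. -/
theorem stmt10 {O : Type*} [CommRing O] [IsDomain O] [IsDiscreteValuationRing O]
    {M M' : Type*} [AddCommGroup M] [AddCommGroup M']
    [Module (PowerSeries O) M] [Module (PowerSeries O) M']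
    [Module O M'] [IsScalarTower O (PowerSeries O) M']
    [Module.Free (PowerSeries O) M] [Module.Finite (PowerSeries O) M]
    [Module.Free (PowerSeries O) M'] [Module.Finite (PowerSeries O) M']
    (hrank : Module.finrank (PowerSeries O) M = Module.finrank (PowerSeries O) M')
    (f : M →ₗ[PowerSeries O] M') (hf : Function.Injective f)
    (n : ℕ) (hn : 0 < n)
    (hsub : ∀ y : M', (PowerSeries.X ^ n : PowerSeries O) • y ∈ LinearMap.range f) :
    (∀ q : M' ⧸ LinearMap.range f, (PowerSeries.X ^ n : PowerSeries O) • q = 0) ∧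
      Module.FinitePresentation (PowerSeries O) (M' ⧸ LinearMap.range f) ∧
      Module.Finite O (M' ⧸ LinearMap.range f) ∧
      Module.Free O (M' ⧸ LinearMap.range f) := by
  set P : Submodule (PowerSeries O) M' := LinearMap.range f with hP
  -- Part 1 : annihilated by X^n
  have h1 : ∀ q : M' ⧸ P, (X ^ n : (PowerSeries O)) • q = 0 := by
    intro q
    obtain ⟨y, rfl⟩ := Submodule.Quotient.mk_surjective P q
    rw [← Submodule.Quotient.mk_smul, Submodule.Quotient.mk_eq_zero]
    exact hsub y
  -- Part 2 : finitely presented over (PowerSeries O)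
  have h2 : Module.FinitePresentation (PowerSeries O) (M' ⧸ P) := by
    haveI : Module.FinitePresentation (PowerSeries O) M' := Module.finitePresentation_of_projective (PowerSeries O) M'
    apply Module.finitePresentation_of_surjective P.mkQ (Submodule.mkQ_surjective P)
    rw [Submodule.ker_mkQ, hP, LinearMap.range_eq_map]
    exact Submodule.FG.map f (Module.Finite.fg_top (R := PowerSeries O) (M := M))
  -- Part 3 : finite over O
  obtain ⟨S, hS⟩ := Module.Finite.fg_top (R := PowerSeries O) (M := M')
  set G : Set (M' ⧸ P) :=
    (fun p : ℕ × M' => (X ^ p.1 : (PowerSeries O)) • (Submodule.Quotient.mk p.2 : M' ⧸ P)) ''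
      ((Set.Iio n) ×ˢ (S : Set M')) with hG
  have hGfin : G.Finite := Set.Finite.image _ ((Set.finite_Iio n).prod S.finite_toSet)
  set N : Submodule O (M' ⧸ P) := Submodule.span O G with hN
  have hGen : ∀ i < n, ∀ s ∈ (S : Set M'),
      (X ^ i : (PowerSeries O)) • (Submodule.Quotient.mk s : M' ⧸ P) ∈ N := by
    intro i hi s hs
    exact Submodule.subset_span ⟨(i, s), ⟨hi, hs⟩, rfl⟩
  have claimA : ∀ s ∈ (S : Set M'), ∀ p : (PowerSeries O),
      p • (Submodule.Quotient.mk s : M' ⧸ P) ∈ N := by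
    intro s hs p
    set Pn : (PowerSeries O) := ∑ k ∈ Finset.range n, C (coeff k p) * X ^ k with hPn
    have hdvd : (X : (PowerSeries O)) ^ n ∣ p - Pn := by
      rw [X_pow_dvd_iff]
      intro m hm
      rw [map_sub, hPn, map_sum]
      rw [Finset.sum_eq_single m]
      · simp [coeff_C_mul, coeff_X_pow]
      · intro k _ hkm
        simp [coeff_C_mul, coeff_X_pow, Ne.symm hkm]
      · intro habs
        exact absurd (Finset.mem_range.2 hm) habs
    obtain ⟨q, hq⟩ := hdvd
    have hp : p = Pn + X ^ n * q := by
      rw [← hq]; ring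
    rw [hp, add_smul, hPn, Finset.sum_smul]
    have hzero : ((X : (PowerSeries O)) ^ n * q) • (Submodule.Quotient.mk s : M' ⧸ P) = 0 := by
      rw [mul_comm, mul_smul, h1]
      exact smul_zero q
    rw [hzero, add_zero]
    apply Submodule.sum_mem
    intro k hk
    have : (C (coeff k p) * X ^ k) • (Submodule.Quotient.mk s : M' ⧸ P) =
        (coeff k p) • ((X ^ k : (PowerSeries O)) • (Submodule.Quotient.mk s : M' ⧸ P)) := by
      rw [mul_smul, C_eq_algebraMap, algebraMap_smul]
    rw [this]
    exact N.smul_mem _ (hGen k (Finset.mem_range.1 hk) s hs)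
  have claimB : ∀ v ∈ N, ∀ p : (PowerSeries O), p • v ∈ N := by
    intro v hv
    induction hv using Submodule.span_induction with
    | mem x hx =>
      obtain ⟨⟨i, s⟩, ⟨_, hs⟩, rfl⟩ := hx
      intro p
      rw [smul_smul]
      exact claimA s hs _
    | zero => intro p; simp
    | add x y _ _ hx hy => intro p; rw [smul_add]; exact N.add_mem (hx p) (hy p)
    | smul a x _ hx =>
      intro p
      rw [smul_comm]
      exact N.smul_mem a (hx p)
  have claimC : ∀ y : M', (Submodule.Quotient.mk y : M' ⧸ P) ∈ N := by
    set W : Submodule (PowerSeries O) M' :=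
      { carrier := {y : M' | (Submodule.Quotient.mk y : M' ⧸ P) ∈ N}
        add_mem' := by
          intro a b ha hb
          show (Submodule.Quotient.mk (a + b) : M' ⧸ P) ∈ N
          rw [Submodule.Quotient.mk_add]
          exact N.add_mem ha hb
        zero_mem' := by
          show (Submodule.Quotient.mk (0 : M') : M' ⧸ P) ∈ N
          rw [Submodule.Quotient.mk_zero]
          exact N.zero_mem
        smul_mem' := by
          intro c y hy
          show (Submodule.Quotient.mk (c • y) : M' ⧸ P) ∈ N
          rw [Submodule.Quotient.mk_smul]
          exact claimB _ hy c } with hW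
    have hSW : (S : Set M') ⊆ W := by
      intro s hs
      have := claimA s hs 1
      exact (by simpa using this : (Submodule.Quotient.mk s : M' ⧸ P) ∈ N)
    have : (⊤ : Submodule (PowerSeries O) M') ≤ W := by
      rw [← hS]
      exact Submodule.span_le.2 hSW
    intro y
    exact this (Submodule.mem_top)
  have hNtop : N = ⊤ := by
    apply eq_top_iff.2
    intro q _
    obtain ⟨y, rfl⟩ := Submodule.Quotient.mk_surjective P q
    exact claimC y
  have h3 : Module.Finite O (M' ⧸ P) := by
    constructor
    rw [← hNtop, hN]
    exact Submodule.fg_def.2 ⟨G, hGfin, rfl⟩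
  -- Part 4 : torsion-free, hence free over the DVR O
  have htf : NoZeroSMulDivisors O (M' ⧸ P) := by
    constructor
    intro a q hq
    by_cases ha : a = 0
    · exact Or.inl ha
    refine Or.inr ?_
    obtain ⟨y, rfl⟩ := Submodule.Quotient.mk_surjective P q
    rw [← Submodule.Quotient.mk_smul, Submodule.Quotient.mk_eq_zero] at hq
    have hq' : (C a) • y ∈ P := by
      rwa [C_eq_algebraMap, algebraMap_smul]
    obtain ⟨x, hx⟩ := hq'
    obtain ⟨w, hw⟩ := hsub y
    have key : f ((X ^ n : (PowerSeries O)) • x) = f ((C a) • w) := by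
      rw [map_smul, map_smul, hx, hw, smul_comm]
    have hxw : (X ^ n : (PowerSeries O)) • x = (C a) • w := hf key
    set b := Module.Free.chooseBasis (PowerSeries O) M with hb
    have hcoord : ∀ i, ∃ c : (PowerSeries O), b.repr x i = C a * c := by
      intro i
      apply aux_X_pow_mul_eq_C_mul (b := b.repr w i)
      have := congrArg (fun v => b.repr v i) hxw
      simpa [Finsupp.smul_apply, smul_eq_mul] using this
    choose c hc using hcoord
    set x' : M := ∑ i, c i • b i with hx'
    have hax' : (C a) • x' = x := by
      rw [hx', Finset.smul_sum]
      have : ∀ i : Module.Free.ChooseBasisIndex (PowerSeries O) M,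
          (C a) • (c i • b i) = b.repr x i • b i := by
        intro i
        rw [smul_smul, ← hc i]
      rw [Finset.sum_congr rfl fun i _ => this i]
      exact b.sum_repr x
    have hfin : (C a) • (f x' - y) = 0 := by
      rw [smul_sub, ← map_smul, hax', hx, sub_self]
    have hCa : (C a : (PowerSeries O)) ≠ 0 := by
      intro h
      exact ha (C_injective (by rw [h, map_zero]))
    have hyx : f x' = y := by
      rcases smul_eq_zero.1 hfin with h | h
      · exact absurd h hCa
      · exact sub_eq_zero.1 h
    rw [Submodule.Quotient.mk_eq_zero]
    exact ⟨x', hyx⟩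
  have h4 : Module.Free O (M' ⧸ P) := by
    haveI := h3
    haveI := htf
    exact Module.free_of_finite_type_torsion_free'
  exact ⟨h1, h2, h3, h4⟩
end

section
/- (Jacobson density for semisimple modules) Let B be an associative unital ring and M a semisimple left B-module. Let f : M → M be an additive endomorphism commuting with every B-linear endomorphism of M (i.e., f lies in the bicommutant of M). Then for every finite sequence x_1, …, x_n ∈ M there exists a ∈ B such that a • x_i = f(x_i) for all 1 ≤ i ≤ n. -/
/-- Single-vector case of Jacobson density. -/
lemma stmt16_single {B M : Type*} [Ring B] [AddCommGroup M] [Module B M]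
    [IsSemisimpleModule B M]
    (f : M →+ M) (hf : ∀ g : Module.End B M, ∀ x : M, f (g x) = g (f x))
    (x : M) : ∃ a : B, a • x = f x := by
  obtain ⟨N', hN'⟩ := exists_isCompl (B ∙ x)
  set π : Module.End B M := (B ∙ x).subtype ∘ₗ Submodule.projectionOnto _ _ hN'
  have hx : π x = x := by
    simp [π, Submodule.projectionOnto_apply_left hN'
      ⟨x, Submodule.mem_span_singleton_self x⟩]
  have : f x ∈ (B ∙ x) := by
    have := hf π x
    rw [hx] at this
    rw [this]
    exact Submodule.coe_mem _
  obtain ⟨a, ha⟩ := Submodule.mem_span_singleton.mp this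
  exact ⟨a, ha⟩

/-- **Jacobson density theorem for semisimple modules.**
Let `B` be an associative unital ring and `M` a semisimple left `B`-module.  If `f : M → M` is
an additive endomorphism commuting with every `B`-linear endomorphism of `M` (i.e. `f` lies in
the bicommutant of `M`), then for every finite sequence `x_1, …, x_n ∈ M` there exists `a ∈ B`
with `a • x_i = f x_i` for all `i`. -/
theorem stmt16 {B M : Type*} [Ring B] [AddCommGroup M] [Module B M]
    [IsSemisimpleModule B M]
    (f : M →+ M) (hf : ∀ g : Module.End B M, ∀ x : M, f (g x) = g (f x))
    (n : ℕ) (x : Fin n → M) :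
    ∃ a : B, ∀ i : Fin n, a • x i = f (x i) := by
  have hss : IsSemisimpleModule B (Fin n → M) := by
    refine isSemisimpleModule_of_isSemisimpleModule_submodule'
      (p := fun i => LinearMap.range (LinearMap.single B (fun _ : Fin n => M) i))
      (fun i => IsSemisimpleModule.range _) (LinearMap.iSup_range_single B _)
  -- componentwise f
  let F : (Fin n → M) →+ (Fin n → M) :=
    { toFun := fun v i => f (v i)
      map_zero' := by ext i; simp
      map_add' := by intro u v; ext i; simp }
  have hF : ∀ g : Module.End B (Fin n → M), ∀ v : Fin n → M, F (g v) = g (F v) := by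
    intro g v
    have hv : ∀ w : Fin n → M, w = ∑ j, Pi.single j (w j) :=
      fun w => (Finset.univ_sum_single w).symm
    ext i
    calc F (g v) i = f ((LinearMap.proj i ∘ₗ g) v) := rfl
      _ = f ((LinearMap.proj i ∘ₗ g) (∑ j, LinearMap.single B (fun _ : Fin n => M) j (v j))) := by
          rw [show (∑ j, LinearMap.single B (fun _ : Fin n => M) j (v j)) = v from
            (Finset.univ_sum_single v)]
      _ = ∑ j, f ((LinearMap.proj i ∘ₗ g ∘ₗ LinearMap.single B (fun _ : Fin n => M) j) (v j)) := by
          rw [map_sum, map_sum]; rfl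
      _ = ∑ j, (LinearMap.proj i ∘ₗ g ∘ₗ LinearMap.single B (fun _ : Fin n => M) j) (f (v j)) := by
          exact Finset.sum_congr rfl fun j _ => hf _ _
      _ = (LinearMap.proj i ∘ₗ g) (∑ j, LinearMap.single B (fun _ : Fin n => M) j (f (v j))) := by
          rw [map_sum]; rfl
      _ = g (F v) i := by
          have h : (∑ j, LinearMap.single B (fun _ : Fin n => M) j (f (v j))) = F v :=
            Finset.univ_sum_single (F v)
          rw [h]; rfl
  obtain ⟨a, ha⟩ := stmt16_single (B := B) (M := Fin n → M) F hF x
  exact ⟨a, fun i => congrFun ha i⟩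
end
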